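/- arXiv:2407.20562 — 2 statements merged into one kernel-verified Lean document; each statement's English description precedes it below -/
import Mathlib

section
/- Let E = E(I₀,{n_k},{c_k},{ξ_{k,l}}) be a homogeneous perfect set satisfying the gap-comparability condition with constant χ ≥ 1, {H_m}_{m≥0} the sequence from Lemma 4.1's construction, and {a_k} a subsequence of {m_k − 1} with lim_{k→∞} (l(H_{a_k}))^{1/a_k} = 1. Then for every p ∈ (0,1] and every sufficiently small ε ∈ (0,1) (e.g. ε^p < 1/2), lim_{k→∞} (∏_{j∈S_ε(a_k)} (1 − (γ(j))^p))^{1/a_k} = 1, where S_ε(m) = {j : 1 ≤ j ≤ m, γ(j) ≤ ε}. -/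
open Set Filter Metric

noncomputable section

/-- A word `σ = σ₁⋯σ_k` is valid for the branching sequence `n` if `1 ≤ σ_j ≤ n j`
for every `1 ≤ j ≤ k`.  Words are represented as lists (read with 1-based indices). -/
def ValidWord (n : ℕ → ℕ) (σ : List ℕ) : Prop :=
  ∀ j, j < σ.length → 1 ≤ σ.getD j 0 ∧ σ.getD j 0 ≤ n (j + 1)

/-- The conditions (1)–(4) of Definition 2.1: the family of closed intervals
`I_σ = [a σ, b σ]` (for `σ ∈ D`) has homogeneous perfect structure with parameters
`n`, `c`, `ξ`. -/
structure HPStruct (n : ℕ → ℕ) (c : ℕ → ℝ) (ξ : ℕ → ℕ → ℝ) (a b : List ℕ → ℝ) : Prop where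
  /-- each `I_{σ*j}` is a subinterval of `I_σ` -/
  sub : ∀ σ : List ℕ, ValidWord n σ → ∀ j, 1 ≤ j → j ≤ n (σ.length + 1) →
    Set.Icc (a (σ ++ [j])) (b (σ ++ [j])) ⊆ Set.Icc (a σ) (b σ)
  /-- `min I_{σ*(l+1)} ≥ max I_{σ*l}` -/
  ord : ∀ σ : List ℕ, ValidWord n σ → ∀ l, 1 ≤ l → l + 1 ≤ n (σ.length + 1) →
    b (σ ++ [l]) ≤ a (σ ++ [l + 1])
  /-- `|I_{σ*j}| / |I_σ| = c_k` -/
  ratio : ∀ σ : List ℕ, ValidWord n σ → ∀ j, 1 ≤ j → j ≤ n (σ.length + 1) →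
    b (σ ++ [j]) - a (σ ++ [j]) = c (σ.length + 1) * (b σ - a σ)
  /-- `min I_{σ*1} - min I_σ = ξ_{k,0}` -/
  gap0 : ∀ σ : List ℕ, ValidWord n σ → a (σ ++ [1]) - a σ = ξ (σ.length + 1) 0
  /-- `min I_{σ*(l+1)} - max I_{σ*l} = ξ_{k,l}` -/
  gapl : ∀ σ : List ℕ, ValidWord n σ → ∀ l, 1 ≤ l → l + 1 ≤ n (σ.length + 1) →
    a (σ ++ [l + 1]) - b (σ ++ [l]) = ξ (σ.length + 1) l
  /-- `max I_σ - max I_{σ*n_k} = ξ_{k,n_k}` -/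
  gapn : ∀ σ : List ℕ, ValidWord n σ → b σ - b (σ ++ [n (σ.length + 1)]) =
    ξ (σ.length + 1) (n (σ.length + 1))

/-- A homogeneous perfect set datum `E(I₀, {n_k}, {c_k}, {ξ_{k,l}})` of Definition 2.1:
a nondegenerate initial closed interval `I₀ = [a ∅, b ∅]`, integers `n_k ≥ 2`,
ratios `c_k > 0` with `n_k c_k < 1`, nonnegative gaps `ξ_{k,l}` (`0 ≤ l ≤ n_k`), and a
family of closed intervals `I_σ = [a σ, b σ]` with homogeneous perfect structure. -/
structure HPS where
  n : ℕ → ℕ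
  c : ℕ → ℝ
  ξ : ℕ → ℕ → ℝ
  a : List ℕ → ℝ
  b : List ℕ → ℝ
  hn : ∀ k, 1 ≤ k → 2 ≤ n k
  hc : ∀ k, 1 ≤ k → 0 < c k
  hnc : ∀ k, 1 ≤ k → (n k : ℝ) * c k < 1
  hξ : ∀ k, 1 ≤ k → ∀ l, l ≤ n k → 0 ≤ ξ k l
  hab : a [] < b []
  struct : HPStruct n c ξ a b

namespace HPS

variable (S : HPS)

/-- `E_k`, the union of the `k`-order basic intervals. -/
def Ek (k : ℕ) : Set ℝ :=
  ⋃ σ ∈ {σ : List ℕ | σ.length = k ∧ ValidWord S.n σ}, Set.Icc (S.a σ) (S.b σ)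

/-- The homogeneous perfect set `E = ⋂_k E_k`. -/
def E : Set ℝ := ⋂ k, S.Ek k

/-- Left endpoint of the trimmed interval `I_σ*` (for `σ ∈ D_k`):
`min I_σ* - min I_σ = ξ_{k+1,0}`. -/
def aStar (σ : List ℕ) : ℝ := S.a σ + S.ξ (σ.length + 1) 0

/-- Right endpoint of the trimmed interval `I_σ*`:
`max I_σ - max I_σ* = ξ_{k+1,n_{k+1}}`. -/
def bStar (σ : List ℕ) : ℝ := S.b σ - S.ξ (σ.length + 1) (S.n (σ.length + 1))

/-- `E_k* = ⋃_{σ ∈ D_k} I_σ*`. -/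
def EkStar (k : ℕ) : Set ℝ :=
  ⋃ σ ∈ {σ : List ℕ | σ.length = k ∧ ValidWord S.n σ}, Set.Icc (S.aStar σ) (S.bStar σ)

/-- `δ_k = |I_σ*|` for `σ ∈ D_k` (this common value is computed on the word `1⋯1`). -/
def delta (k : ℕ) : ℝ :=
  S.bStar (List.replicate k 1) - S.aStar (List.replicate k 1)

/-- `c_k* = δ_k / δ_{k-1}`. -/
def cStar (k : ℕ) : ℝ := S.delta k / S.delta (k - 1)

/-- `δ_k* = δ₀ c₁* ⋯ c_k*`. -/
def deltaStar (k : ℕ) : ℝ := S.delta 0 * ∏ j ∈ Finset.Icc 1 k, S.cStar j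

/-- `N_k* = n₁* ⋯ n_k* = n₁ ⋯ n_k`. -/
def Nstar (k : ℕ) : ℕ := ∏ j ∈ Finset.Icc 1 k, S.n j

/-- The reconstructed gap parameters: `ξ*_{k,l} = ξ_{k,l} + ξ_{k+1,0} + ξ_{k+1,n_{k+1}}`
for `1 ≤ l ≤ n_k - 1`, `ξ*_{k,0} = ξ_{k+1,0}`, `ξ*_{k,n_k} = ξ_{k+1,n_{k+1}}`. -/
def xiStar (k l : ℕ) : ℝ :=
  if l = 0 then S.ξ (k + 1) 0
  else if l = S.n k then S.ξ (k + 1) (S.n (k + 1))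
  else S.ξ k l + S.ξ (k + 1) 0 + S.ξ (k + 1) (S.n (k + 1))

/-- `α̲*_k = min_{1 ≤ l ≤ n_k - 1} ξ*_{k,l}`. -/
def alphaLo (k : ℕ) : ℝ := sInf ((fun l => S.xiStar k l) '' Set.Icc 1 (S.n k - 1))

/-- `α̅*_k = max_{1 ≤ l ≤ n_k - 1} ξ*_{k,l}`. -/
def alphaHi (k : ℕ) : ℝ := sSup ((fun l => S.xiStar k l) '' Set.Icc 1 (S.n k - 1))

end HPS

/-- The gap-comparability condition: `max_{1≤l≤n_k-1} ξ_{k,l} ≤ χ · min_{1≤l≤n_k-1} ξ_{k,l}`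
for every `k ≥ 1`. -/
def GapComparable (S : HPS) (χ : ℝ) : Prop :=
  ∀ k, 1 ≤ k → ∀ l l', 1 ≤ l → l ≤ S.n k - 1 → 1 ≤ l' → l' ≤ S.n k - 1 →
    S.ξ k l ≤ χ * S.ξ k l'

/-- `M = ⌊2χ⌋ + 1`. -/
def Mconst (χ : ℝ) : ℕ := ⌊2 * χ⌋₊ + 1

/-- `i_k`: equal to `1` if `n_k < M`, and otherwise the integer with `M^{i_k} ≤ n_k < M^{i_k+1}`. -/
def HPS.ik (S : HPS) (χ : ℝ) (k : ℕ) : ℕ := max 1 (Nat.log (Mconst χ) (S.n k))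

/-- `m_k = i₁ + ⋯ + i_k` (with `m₀ = 0`). -/
def HPS.mIdx (S : HPS) (χ : ℝ) (k : ℕ) : ℕ := ∑ l ∈ Finset.Icc 1 k, S.ik χ l

/-- For `m ≥ 1`, the index `k` with `m_{k-1} < m ≤ m_k`. -/
def HPS.kOf (S : HPS) (χ : ℝ) (m : ℕ) : ℕ := sInf {k | m ≤ S.mIdx χ k}

/-- The data of the sequence `{H_m}` constructed in Lemma 4.1, with its characterizing
properties.  `Br m` is the finite set of branches of `H_m`, a branch being recorded by its
endpoints, and `H_m = ⋃_{p ∈ Br m} [p.1, p.2]`. -/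
structure BranchSeq (S : HPS) (χ : ℝ) where
  Br : ℕ → Finset (ℝ × ℝ)
  /-- each `H_m` has at least one branch -/
  nonempty : ∀ m, (Br m).Nonempty
  /-- branches are nondegenerate closed intervals -/
  lt : ∀ m, ∀ p ∈ Br m, p.1 < p.2
  /-- distinct branches of `H_m` have disjoint interiors -/
  disj : ∀ m, ∀ p ∈ Br m, ∀ q ∈ Br m, p ≠ q →
    Set.Ioo p.1 p.2 ∩ Set.Ioo q.1 q.2 = ∅
  /-- the sequence `H_m` is decreasing under inclusion -/
  dec : ∀ m, (⋃ p ∈ Br (m + 1), Set.Icc p.1 p.2) ⊆ ⋃ p ∈ Br m, Set.Icc p.1 p.2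
  /-- every branch of `H_{m+1}` is contained in a branch of `H_m` -/
  nested : ∀ m, ∀ q ∈ Br (m + 1), ∃ p ∈ Br m, Set.Icc q.1 q.2 ⊆ Set.Icc p.1 p.2
  /-- `E = ⋂_m H_m` -/
  interE : S.E = ⋂ m, ⋃ p ∈ Br m, Set.Icc p.1 p.2
  /-- `H_{m_k} = E_k*`, the branches being exactly the intervals `I_σ*`, `σ ∈ D_k` -/
  levels : ∀ k, (Br (S.mIdx χ k) : Set (ℝ × ℝ)) =
    {p : ℝ × ℝ | ∃ σ : List ℕ, σ.length = k ∧ ValidWord S.n σ ∧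
      p = (S.aStar σ, S.bStar σ)}
  /-- each branch of `H_m` contains at most `M²` branches of `H_{m+1}` -/
  card_le : ∀ m, ∀ p ∈ Br m,
    {q ∈ (Br (m + 1) : Set (ℝ × ℝ)) | Set.Icc q.1 q.2 ⊆ Set.Icc p.1 p.2}.ncard ≤
      (Mconst χ) ^ 2
  /-- for `m_{k-1} < m < m_k`, each branch of `H_{m-1}` contains exactly `M` branches of `H_m` -/
  exactM : ∀ k, 1 ≤ k → ∀ m, S.mIdx χ (k - 1) < m → m < S.mIdx χ k →
    ∀ p ∈ Br (m - 1),
      {q ∈ (Br m : Set (ℝ × ℝ)) | Set.Icc q.1 q.2 ⊆ Set.Icc p.1 p.2}.ncard = Mconst χ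
  /-- for `m_{k-1} < m < m_k`, each branch of `H_m` is the convex hull of a block of
  consecutive intervals `I_σ*`, `σ ∈ D_k`: its endpoints are endpoints of such intervals -/
  hull : ∀ k, 1 ≤ k → ∀ m, S.mIdx χ (k - 1) < m → m < S.mIdx χ k →
    ∀ p ∈ Br m, ∃ σ τ : List ℕ, σ.length = k ∧ τ.length = k ∧
      ValidWord S.n σ ∧ ValidWord S.n τ ∧ p.1 = S.aStar σ ∧ p.2 = S.bStar τ
  /-- `max_{I ∈ H_m} |I| ≤ 2χ · min_{I ∈ H_m} |I|` -/
  comparable : ∀ m, ∀ p ∈ Br m, ∀ q ∈ Br m, p.2 - p.1 ≤ 2 * χ * (q.2 - q.1)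

namespace BranchSeq

variable {S : HPS} {χ : ℝ} (B : BranchSeq S χ)

/-- `l(H_m)`, the total length of the branches of `H_m`. -/
def len (m : ℕ) : ℝ := ∑ p ∈ B.Br m, (p.2 - p.1)

/-- `max_{I branch of H_m} |I|`. -/
def maxLen (m : ℕ) : ℝ :=
  sSup ((fun p : ℝ × ℝ => p.2 - p.1) '' (B.Br m : Set (ℝ × ℝ)))

/-- `min_{I branch of H_m} |I|`. -/
def minLen (m : ℕ) : ℝ :=
  sInf ((fun p : ℝ × ℝ => p.2 - p.1) '' (B.Br m : Set (ℝ × ℝ)))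

/-- `Λ(m) = max {|J|/|I| : I branch of H_{m-1}, J branch of H_m, J ⊆ I}`. -/
def Lam (m : ℕ) : ℝ :=
  sSup {r : ℝ | ∃ p ∈ B.Br (m - 1), ∃ q ∈ B.Br m,
    Set.Icc q.1 q.2 ⊆ Set.Icc p.1 p.2 ∧ r = (q.2 - q.1) / (p.2 - p.1)}

/-- `λ(m) = min {|J|/|I| : I branch of H_{m-1}, J branch of H_m, J ⊆ I}`. -/
def lamSmall (m : ℕ) : ℝ :=
  sInf {r : ℝ | ∃ p ∈ B.Br (m - 1), ∃ q ∈ B.Br m,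
    Set.Icc q.1 q.2 ⊆ Set.Icc p.1 p.2 ∧ r = (q.2 - q.1) / (p.2 - p.1)}

/-- `γ(m) = α̲*_k / max_{I branch of H_{m-1}} |I|`, where `m_{k-1} < m ≤ m_k`. -/
def gam (m : ℕ) : ℝ := S.alphaLo (S.kOf χ m) / B.maxLen (m - 1)

/-- `Γ(m) = α̅*_k / min_{I branch of H_{m-1}} |I|`, where `m_{k-1} < m ≤ m_k`. -/
def Gam (m : ℕ) : ℝ := S.alphaHi (S.kOf χ m) / B.minLen (m - 1)

open Classical in
/-- `S_ε(m) = {j : 1 ≤ j ≤ m, γ(j) ≤ ε}`. -/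
def Sfin (ε : ℝ) (m : ℕ) : Finset ℕ := (Finset.Icc 1 m).filter (fun j => B.gam j ≤ ε)

open Classical in
/-- The branches of `H_{m+1}` contained in the branch `p` of `H_m`. -/
def children (m : ℕ) (p : ℝ × ℝ) : Finset (ℝ × ℝ) :=
  (B.Br (m + 1)).filter (fun q => p.1 ≤ q.1 ∧ q.2 ≤ p.2)

end BranchSeq

-- ===== auxiliary development (A) =====

open Set Filter Metric

namespace HPS

variable (S : HPS)

lemma valid_append {n : ℕ → ℕ} {σ : List ℕ} {j : ℕ} (h : ValidWord n σ)
    (h1 : 1 ≤ j) (h2 : j ≤ n (σ.length + 1)) : ValidWord n (σ ++ [j]) := by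
  intro i hi
  simp only [List.length_append, List.length_singleton] at hi
  rcases lt_or_ge i σ.length with hlt | hge
  · have := h i hlt
    rwa [List.getD_append _ _ _ _ hlt]
  · have : i = σ.length := by omega
    subst this
    rw [List.getD_append_right _ _ _ _ le_rfl]
    simpa using ⟨h1, h2⟩

lemma valid_of_append {n : ℕ → ℕ} {σ : List ℕ} {j : ℕ} (h : ValidWord n (σ ++ [j])) :
    ValidWord n σ := by
  intro i hi
  have := h i (by simp; omega)
  rwa [List.getD_append _ _ _ _ hi] at this

lemma last_of_append {n : ℕ → ℕ} {σ : List ℕ} {j : ℕ} (h : ValidWord n (σ ++ [j])) :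
    1 ≤ j ∧ j ≤ n (σ.length + 1) := by
  have := h σ.length (by simp)
  rwa [List.getD_append_right _ _ _ _ le_rfl, Nat.sub_self] at this

lemma valid_take {n : ℕ → ℕ} {σ : List ℕ} (h : ValidWord n σ) (i : ℕ) :
    ValidWord n (σ.take i) := by
  intro j hj
  rw [List.length_take] at hj
  have hjσ : j < σ.length := lt_of_lt_of_le hj (by omega)
  have := h j hjσ
  have he : (List.take i σ)[j]? = σ[j]? := by
    rw [List.getElem?_take]; exact if_pos (by omega)
  rwa [List.getD_eq_getElem?_getD, he, ← List.getD_eq_getElem?_getD]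

/-- `a σ < b σ` for valid words. -/
lemma a_lt_b : ∀ σ : List ℕ, ValidWord S.n σ → S.a σ < S.b σ := by
  intro σ
  induction σ using List.reverseRecOn with
  | nil => intro _; exact S.hab
  | append_singleton σ j ih =>
    intro h
    have hσ := valid_of_append h
    have hj := last_of_append h
    have hr := S.struct.ratio σ hσ j hj.1 hj.2
    have hc := S.hc (σ.length + 1) (by omega)
    nlinarith [ih hσ]

/-- basic subset: child interval inside parent. -/
lemma Icc_append_subset {σ : List ℕ} (h : ValidWord S.n (σ ++ [j])) :
    Set.Icc (S.a (σ ++ [j])) (S.b (σ ++ [j])) ⊆ Set.Icc (S.a σ) (S.b σ) := by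
  have hσ := valid_of_append h
  have hj := last_of_append h
  exact S.struct.sub σ hσ j hj.1 hj.2

/-- interval of a word is inside interval of any prefix. -/
lemma Icc_subset_take : ∀ σ : List ℕ, ValidWord S.n σ → ∀ i,
    Set.Icc (S.a σ) (S.b σ) ⊆ Set.Icc (S.a (σ.take i)) (S.b (σ.take i)) := by
  intro σ
  induction σ using List.reverseRecOn with
  | nil => intro _ i; simp
  | append_singleton σ j ih =>
    intro h i
    rcases le_or_gt (σ.length + 1) i with hi | hi
    · rw [List.take_of_length_le (by simpa using hi)]
    · have hi' : i ≤ σ.length := by omega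
      rw [List.take_append_of_le_length hi']
      have h1 := S.Icc_append_subset h
      have h2 := ih (valid_of_append h) i
      exact h1.trans h2

lemma a_le_of_subset {σ τ : List ℕ} (hσ : ValidWord S.n σ)
    (hsub : Set.Icc (S.a σ) (S.b σ) ⊆ Set.Icc (S.a τ) (S.b τ)) :
    S.a τ ≤ S.a σ ∧ S.b σ ≤ S.b τ := by
  have h1 := hsub (Set.left_mem_Icc.2 (S.a_lt_b σ hσ).le)
  have h2 := hsub (Set.right_mem_Icc.2 (S.a_lt_b σ hσ).le)
  exact ⟨h1.1, h2.2⟩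

/-- sibling order: `b (σ++[l]) ≤ a (σ++[l'])` for `l < l'`. -/
lemma sibling_order {σ : List ℕ} (hσ : ValidWord S.n σ) {l l' : ℕ}
    (h1 : 1 ≤ l) (h2 : l < l') (h3 : l' ≤ S.n (σ.length + 1)) :
    S.b (σ ++ [l]) ≤ S.a (σ ++ [l']) := by
  induction l' with
  | zero => omega
  | succ m ih =>
    rcases Nat.lt_or_ge l m with hlm | hlm
    · have hm1 : 1 ≤ m := by omega
      have := S.struct.ord σ hσ m hm1 h3
      have h4 := ih hlm (by omega)
      have h5 : S.a (σ ++ [m]) ≤ S.b (σ ++ [m]) :=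
        (S.a_lt_b _ (valid_append hσ hm1 (by omega))).le
      linarith
    · have : l = m := by omega
      subst this
      exact S.struct.ord σ hσ l h1 h3

/-- separation of distinct same-length valid words. -/
lemma separation : ∀ σ τ : List ℕ, σ.length = τ.length → ValidWord S.n σ →
    ValidWord S.n τ → σ ≠ τ → S.b σ ≤ S.a τ ∨ S.b τ ≤ S.a σ := by
  intro σ
  induction σ using List.reverseRecOn with
  | nil =>
    intro τ hlen _ _ hne
    exact absurd (List.eq_nil_of_length_eq_zero hlen.symm).symm hne
  | append_singleton σ j ih =>
    intro τ hlen hσ hτ hne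
    rcases List.eq_nil_or_concat τ with rfl | ⟨τ', j', rfl⟩
    · simp at hlen
    · simp only [List.concat_eq_append] at hlen hτ hne ⊢
      have hlen' : σ.length = τ'.length := by
        simpa using hlen
      by_cases hst : σ = τ'
      · subst hst
        have hjj : j ≠ j' := fun h => hne (by rw [h])
        have hj := last_of_append hσ
        have hj' := last_of_append hτ
        rcases Nat.lt_or_ge j j' with h | h
        · exact Or.inl (S.sibling_order (valid_of_append hσ) hj.1 h hj'.2)
        · exact Or.inr (S.sibling_order (valid_of_append hτ) hj'.1 (by omega) hj.2)
      · have hsep := ih τ' hlen' (valid_of_append hσ) (valid_of_append hτ) hst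
        have h1 := S.a_le_of_subset (σ := σ ++ [j]) hσ (S.Icc_append_subset hσ)
        have h2 := S.a_le_of_subset (σ := τ' ++ [j']) hτ (S.Icc_append_subset hτ)
        rcases hsep with h | h
        · exact Or.inl (by linarith [h1.2, h2.1])
        · exact Or.inr (by linarith [h2.2, h1.1])

end HPS

-- ===== auxiliary development (B) =====

open Set Filter Metric

namespace HPS

variable (S : HPS)

lemma n_ge_two {k : ℕ} (hk : 1 ≤ k) : 2 ≤ S.n k := S.hn k hk

lemma aStar_eq {σ : List ℕ} (h : ValidWord S.n σ) : S.aStar σ = S.a (σ ++ [1]) := by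
  have := S.struct.gap0 σ h
  unfold aStar
  linarith

lemma bStar_eq {σ : List ℕ} (h : ValidWord S.n σ) :
    S.bStar σ = S.b (σ ++ [S.n (σ.length + 1)]) := by
  have := S.struct.gapn σ h
  unfold bStar
  linarith

lemma valid_append_one {σ : List ℕ} (h : ValidWord S.n σ) : ValidWord S.n (σ ++ [1]) :=
  valid_append h le_rfl (by have := S.n_ge_two (k := σ.length + 1) (by omega); omega)

lemma valid_append_n {σ : List ℕ} (h : ValidWord S.n σ) :
    ValidWord S.n (σ ++ [S.n (σ.length + 1)]) :=
  valid_append h (by have := S.n_ge_two (k := σ.length + 1) (by omega); omega) le_rfl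

lemma aStar_lt_bStar {σ : List ℕ} (h : ValidWord S.n σ) : S.aStar σ < S.bStar σ := by
  have h2 := S.n_ge_two (k := σ.length + 1) (by omega)
  rw [S.aStar_eq h, S.bStar_eq h]
  have h1 := S.a_lt_b _ (S.valid_append_one h)
  have hn := S.a_lt_b _ (S.valid_append_n h)
  rcases Nat.lt_or_ge 1 (S.n (σ.length + 1)) with hlt | hge
  · have := S.sibling_order h le_rfl hlt le_rfl
    linarith
  · omega

lemma a_le_aStar {σ : List ℕ} : S.a σ ≤ S.aStar σ := by
  have := S.hξ (σ.length + 1) (by omega) 0 (Nat.zero_le _)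
  unfold aStar; linarith

lemma bStar_le_b {σ : List ℕ} : S.bStar σ ≤ S.b σ := by
  have := S.hξ (σ.length + 1) (by omega) (S.n (σ.length + 1)) le_rfl
  unfold bStar; linarith

lemma star_subset {σ : List ℕ} :
    Set.Icc (S.aStar σ) (S.bStar σ) ⊆ Set.Icc (S.a σ) (S.b σ) :=
  Set.Icc_subset_Icc S.a_le_aStar S.bStar_le_b

/-- star intervals of children are inside the star interval of the parent. -/
lemma star_child_subset {σ : List ℕ} (h : ValidWord S.n σ) {l : ℕ}
    (h1 : 1 ≤ l) (h2 : l ≤ S.n (σ.length + 1)) :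
    S.aStar σ ≤ S.aStar (σ ++ [l]) ∧ S.bStar (σ ++ [l]) ≤ S.bStar σ := by
  have hv : ValidWord S.n (σ ++ [l]) := valid_append h h1 h2
  constructor
  · have ha : S.a (σ ++ [1]) ≤ S.a (σ ++ [l]) := by
      rcases Nat.lt_or_ge 1 l with hlt | hge
      · have := S.sibling_order h le_rfl hlt h2
        have := S.a_lt_b _ (S.valid_append_one h)
        linarith
      · have : l = 1 := by omega
        subst this; rfl
    calc S.aStar σ = S.a (σ ++ [1]) := S.aStar_eq h
    _ ≤ S.a (σ ++ [l]) := ha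
    _ ≤ S.aStar (σ ++ [l]) := S.a_le_aStar
  · have hb : S.b (σ ++ [l]) ≤ S.b (σ ++ [S.n (σ.length + 1)]) := by
      rcases Nat.lt_or_ge l (S.n (σ.length + 1)) with hlt | hge
      · have := S.sibling_order h h1 hlt le_rfl
        have := S.a_lt_b _ (S.valid_append_n h)
        linarith
      · have : l = S.n (σ.length + 1) := by omega
        subst this; rfl
    calc S.bStar (σ ++ [l]) ≤ S.b (σ ++ [l]) := S.bStar_le_b
    _ ≤ S.b (σ ++ [S.n (σ.length + 1)]) := hb
    _ = S.bStar σ := (S.bStar_eq h).symm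

/-- the gap between adjacent sibling star intervals is `ξ*`. -/
lemma star_gap {σ : List ℕ} (h : ValidWord S.n σ) {l : ℕ}
    (h1 : 1 ≤ l) (h2 : l + 1 ≤ S.n (σ.length + 1)) :
    S.aStar (σ ++ [l + 1]) - S.bStar (σ ++ [l]) = S.xiStar (σ.length + 1) l := by
  have hgapl := S.struct.gapl σ h l h1 h2
  have hlen1 : (σ ++ [l]).length = σ.length + 1 := by simp
  have hlen2 : (σ ++ [l + 1]).length = σ.length + 1 := by simp
  unfold aStar bStar xiStar
  rw [hlen1, hlen2, if_neg (by omega), if_neg (by omega)]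
  linarith

lemma xiStar_nonneg {k l : ℕ} (hk : 1 ≤ k) (h1 : 1 ≤ l) (h2 : l ≤ S.n k - 1) :
    0 ≤ S.xiStar k l := by
  have hn2 := S.n_ge_two hk
  have g1 := S.hξ k hk l (by omega)
  have g2 := S.hξ (k + 1) (by omega) 0 (Nat.zero_le _)
  have g3 := S.hξ (k + 1) (by omega) (S.n (k + 1)) le_rfl
  unfold xiStar
  rw [if_neg (by omega), if_neg (by omega)]
  linarith

lemma alphaLo_le {k l : ℕ} (h1 : 1 ≤ l) (h2 : l ≤ S.n k - 1) :
    S.alphaLo k ≤ S.xiStar k l := by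
  apply csInf_le
  · exact ((Set.finite_Icc 1 (S.n k - 1)).image _).bddBelow
  · exact Set.mem_image_of_mem _ ⟨h1, h2⟩

lemma alphaLo_nonneg {k : ℕ} (hk : 1 ≤ k) : 0 ≤ S.alphaLo k := by
  have hn2 := S.n_ge_two hk
  apply le_csInf
  · exact ⟨_, Set.mem_image_of_mem _ (⟨le_rfl, by omega⟩ : 1 ∈ Set.Icc 1 (S.n k - 1))⟩
  · rintro x ⟨l, ⟨hl1, hl2⟩, rfl⟩
    exact S.xiStar_nonneg hk hl1 hl2

/-- W4: if `I_σ*` is inside `I_ρ*` with `ρ` one level up, then `ρ = σ.dropLast`. -/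
lemma dropLast_eq_of_star_subset {σ ρ : List ℕ} (hσ : ValidWord S.n σ)
    (hρ : ValidWord S.n ρ) (hlen : σ.length = ρ.length + 1)
    (hsub : Set.Icc (S.aStar σ) (S.bStar σ) ⊆ Set.Icc (S.aStar ρ) (S.bStar ρ)) :
    σ.dropLast = ρ := by
  by_contra hne
  set π := σ.dropLast with hπ
  have hπt : π = σ.take (σ.length - 1) := by
    rw [hπ, List.dropLast_eq_take]
  have hπv : ValidWord S.n π := by rw [hπt]; exact valid_take hσ _
  have hπlen : π.length = ρ.length := by
    rw [hπ]; simp [List.length_dropLast]; omega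
  have hIπ : Set.Icc (S.a σ) (S.b σ) ⊆ Set.Icc (S.a π) (S.b π) := by
    rw [hπt]; exact S.Icc_subset_take σ hσ _
  have hlt := S.aStar_lt_bStar hσ
  have hmem1 : S.aStar σ ∈ Set.Icc (S.aStar σ) (S.bStar σ) := Set.left_mem_Icc.2 hlt.le
  have hmem2 : S.bStar σ ∈ Set.Icc (S.aStar σ) (S.bStar σ) := Set.right_mem_Icc.2 hlt.le
  have hsubπ : Set.Icc (S.aStar σ) (S.bStar σ) ⊆ Set.Icc (S.a π) (S.b π) :=
    (S.star_subset.trans hIπ)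
  have hsubρ : Set.Icc (S.aStar σ) (S.bStar σ) ⊆ Set.Icc (S.a ρ) (S.b ρ) :=
    hsub.trans S.star_subset
  rcases S.separation π ρ hπlen hπv hρ hne with hs | hs
  · have := (hsubπ hmem2).2
    have := (hsubρ hmem1).1
    linarith
  · have := (hsubρ hmem2).2
    have := (hsubπ hmem1).1
    linarith

end HPS

-- ===== auxiliary development (C) =====

open Set Filter Metric

lemma Mconst_ge_three {χ : ℝ} (hχ : 1 ≤ χ) : 3 ≤ Mconst χ := by
  unfold Mconst
  have : (2 : ℝ) ≤ 2 * χ := by linarith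
  have h2 : 2 ≤ ⌊2 * χ⌋₊ := by
    have := Nat.le_floor (α := ℝ) (n := 2) (by exact_mod_cast this)
    omega
  omega

namespace HPS

variable (S : HPS) (χ : ℝ)

lemma ik_ge_one (k : ℕ) : 1 ≤ S.ik χ k := le_max_left _ _

lemma mIdx_succ (k : ℕ) : S.mIdx χ (k + 1) = S.mIdx χ k + S.ik χ (k + 1) := by
  unfold mIdx
  rw [Finset.sum_Icc_succ_top (by omega)]

lemma mIdx_zero : S.mIdx χ 0 = 0 := by
  unfold mIdx; simp

lemma mIdx_mono : Monotone (S.mIdx χ) := by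
  apply monotone_nat_of_le_succ
  intro k
  rw [S.mIdx_succ]
  omega

lemma mIdx_ge (k : ℕ) : k ≤ S.mIdx χ k := by
  induction k with
  | zero => omega
  | succ k ih => rw [S.mIdx_succ]; have := S.ik_ge_one χ (k + 1); omega

lemma kOf_spec {m : ℕ} (hm : 1 ≤ m) :
    1 ≤ S.kOf χ m ∧ S.mIdx χ (S.kOf χ m - 1) < m ∧ m ≤ S.mIdx χ (S.kOf χ m) := by
  have hne : S.kOf χ m ∈ {k | m ≤ S.mIdx χ k} := by
    apply Nat.sInf_mem
    exact ⟨m, S.mIdx_ge χ m⟩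
  have hk1 : 1 ≤ S.kOf χ m := by
    rcases Nat.eq_zero_or_pos (S.kOf χ m) with h0 | h
    · exfalso
      have : m ≤ S.mIdx χ 0 := by rw [← h0]; exact hne
      rw [S.mIdx_zero] at this; omega
    · exact h
  refine ⟨hk1, ?_, hne⟩
  have : S.kOf χ m - 1 < S.kOf χ m := by omega
  have hnotin := Nat.notMem_of_lt_sInf (s := {k | m ≤ S.mIdx χ k}) this
  simpa using Nat.lt_of_not_le (by simpa using hnotin)

/-- if `n_k ≥ 2 M^{i_k - 1}`. -/
lemma n_ge_two_mul_pow {χ : ℝ} (hχ : 1 ≤ χ) {k : ℕ} (hk : 1 ≤ k) :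
    2 * Mconst χ ^ (S.ik χ k - 1) ≤ S.n k := by
  have hM := Mconst_ge_three hχ
  have hn2 := S.n_ge_two hk
  rcases Nat.lt_or_ge (Nat.log (Mconst χ) (S.n k)) 2 with hlog | hlog
  · have : S.ik χ k = 1 := by unfold ik; omega
    rw [this]; simpa using hn2
  · have hik : S.ik χ k = Nat.log (Mconst χ) (S.n k) := by
      unfold ik; omega
    have hpow : Mconst χ ^ Nat.log (Mconst χ) (S.n k) ≤ S.n k :=
      Nat.pow_log_le_self _ (by omega)
    rw [hik]
    calc 2 * Mconst χ ^ (Nat.log (Mconst χ) (S.n k) - 1)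
        ≤ Mconst χ * Mconst χ ^ (Nat.log (Mconst χ) (S.n k) - 1) := by
          apply Nat.mul_le_mul_right; omega
      _ = Mconst χ ^ (Nat.log (Mconst χ) (S.n k)) := by
          rw [← pow_succ']
          congr 1
          omega
      _ ≤ S.n k := hpow

end HPS

-- ===== auxiliary development (D) =====

open Set Filter Metric

namespace BranchSeq

variable {S : HPS} {χ : ℝ} (B : BranchSeq S χ)

lemma mem_Br_levels {k : ℕ} {σ : List ℕ} (hlen : σ.length = k) (hv : ValidWord S.n σ) :
    (S.aStar σ, S.bStar σ) ∈ B.Br (S.mIdx χ k) := by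
  have := B.levels k
  rw [← Finset.mem_coe, this]
  exact ⟨σ, hlen, hv, rfl⟩

lemma levels_mem {k : ℕ} {q : ℝ × ℝ} (hq : q ∈ B.Br (S.mIdx χ k)) :
    ∃ σ : List ℕ, σ.length = k ∧ ValidWord S.n σ ∧ q = (S.aStar σ, S.bStar σ) := by
  have := B.levels k
  rw [← Finset.mem_coe, this] at hq
  exact hq

lemma eq_of_mem_Ioo {m : ℕ} {p q : ℝ × ℝ} (hp : p ∈ B.Br m) (hq : q ∈ B.Br m)
    {x : ℝ} (hxp : x ∈ Set.Ioo p.1 p.2) (hxq : x ∈ Set.Ioo q.1 q.2) : p = q := by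
  by_contra hne
  have := B.disj m p hp q hq hne
  exact absurd (Set.mem_inter hxp hxq) (by rw [this]; exact notMem_empty x)

/-- every branch of `H_{m'}` is inside some branch of `H_m` for `m ≤ m'`. -/
lemma desc_exists {m m' : ℕ} (h : m ≤ m') {q : ℝ × ℝ} (hq : q ∈ B.Br m') :
    ∃ p ∈ B.Br m, p.1 ≤ q.1 ∧ q.2 ≤ p.2 := by
  induction m' , h using Nat.le_induction generalizing q with
  | base => exact ⟨q, hq, le_rfl, le_rfl⟩
  | succ m' hmm' ih =>
    obtain ⟨r, hr, hsub⟩ := B.nested m' q hq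
    have hrq : r.1 ≤ q.1 ∧ q.2 ≤ r.2 := by
      rw [Set.Icc_subset_Icc_iff (B.lt _ q hq).le] at hsub
      exact hsub
    obtain ⟨p, hp, hpr⟩ := ih hr
    exact ⟨p, hp, le_trans hpr.1 hrq.1, le_trans hrq.2 hpr.2⟩

lemma bddAbove_lengths (m : ℕ) :
    BddAbove ((fun p : ℝ × ℝ => p.2 - p.1) '' (B.Br m : Set (ℝ × ℝ))) :=
  (((B.Br m).finite_toSet).image _).bddAbove

lemma le_maxLen {m : ℕ} {p : ℝ × ℝ} (hp : p ∈ B.Br m) : p.2 - p.1 ≤ B.maxLen m :=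
  le_csSup (B.bddAbove_lengths m) (Set.mem_image_of_mem _ hp)

lemma maxLen_mem (m : ℕ) : ∃ p ∈ B.Br m, B.maxLen m = p.2 - p.1 := by
  have hne : ((fun p : ℝ × ℝ => p.2 - p.1) '' (B.Br m : Set (ℝ × ℝ))).Nonempty :=
    (B.nonempty m).to_set.image _
  have := hne.csSup_mem (((B.Br m).finite_toSet).image _)
  obtain ⟨p, hp, hpe⟩ := this
  exact ⟨p, hp, hpe.symm⟩

lemma maxLen_pos (m : ℕ) : 0 < B.maxLen m := by
  obtain ⟨p, hp, he⟩ := B.maxLen_mem m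
  rw [he]
  have := B.lt m p hp
  linarith

lemma maxLen_anti {m m' : ℕ} (h : m ≤ m') : B.maxLen m' ≤ B.maxLen m := by
  obtain ⟨p, hp, he⟩ := B.maxLen_mem m'
  rw [he]
  obtain ⟨r, hr, h1, h2⟩ := B.desc_exists h hp
  calc p.2 - p.1 ≤ r.2 - r.1 := by linarith
  _ ≤ B.maxLen m := B.le_maxLen hr

lemma len_le_card_mul_maxLen (m : ℕ) :
    B.len m ≤ ((B.Br m).card : ℝ) * B.maxLen m := by
  unfold len
  calc ∑ p ∈ B.Br m, (p.2 - p.1) ≤ ∑ _p ∈ B.Br m, B.maxLen m :=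
    Finset.sum_le_sum (fun p hp => B.le_maxLen hp)
  _ = ((B.Br m).card : ℝ) * B.maxLen m := by
    rw [Finset.sum_const, nsmul_eq_mul]

lemma len_pos (m : ℕ) : 0 < B.len m := by
  unfold len
  apply Finset.sum_pos (fun p hp => by have := B.lt m p hp; linarith) (B.nonempty m)

open Classical in
/-- the branches of `H_{m'}` inside a branch `p` of `H_m`. -/
noncomputable def desc (m' : ℕ) (p : ℝ × ℝ) : Finset (ℝ × ℝ) :=
  (B.Br m').filter (fun q => p.1 ≤ q.1 ∧ q.2 ≤ p.2)

lemma children_eq_desc (m : ℕ) (p : ℝ × ℝ) : B.children m p = B.desc (m + 1) p := by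
  unfold children desc
  congr 1

lemma mem_desc {m' : ℕ} {p q : ℝ × ℝ} :
    q ∈ B.desc m' p ↔ q ∈ B.Br m' ∧ p.1 ≤ q.1 ∧ q.2 ≤ p.2 := by
  unfold desc
  simp [Finset.mem_filter]

lemma desc_pairwise (m m' : ℕ) (hm : m ≤ m') :
    ∀ p ∈ B.Br m, ∀ p' ∈ B.Br m, p ≠ p' → Disjoint (B.desc m' p) (B.desc m' p') := by
  intro p hp p' hp' hne
  rw [Finset.disjoint_left]
  intro q hq hq'
  rw [B.mem_desc] at hq hq'
  have hltq := B.lt m' q hq.1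
  have hx : (q.1 + q.2) / 2 ∈ Set.Ioo q.1 q.2 := by constructor <;> linarith
  have hxp : (q.1 + q.2) / 2 ∈ Set.Ioo p.1 p.2 :=
    ⟨lt_of_le_of_lt hq.2.1 hx.1, lt_of_lt_of_le hx.2 hq.2.2⟩
  have hxp' : (q.1 + q.2) / 2 ∈ Set.Ioo p'.1 p'.2 :=
    ⟨lt_of_le_of_lt hq'.2.1 hx.1, lt_of_lt_of_le hx.2 hq'.2.2⟩
  exact hne (B.eq_of_mem_Ioo hp hp' hxp hxp')

lemma biUnion_desc {m m' : ℕ} (h : m ≤ m') :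
    (B.Br m).biUnion (B.desc m') = B.Br m' := by
  apply Finset.Subset.antisymm
  · intro q hq
    rw [Finset.mem_biUnion] at hq
    obtain ⟨p, _, hq⟩ := hq
    exact ((B.mem_desc).1 hq).1
  · intro q hq
    rw [Finset.mem_biUnion]
    obtain ⟨p, hp, h1, h2⟩ := B.desc_exists h hq
    exact ⟨p, hp, (B.mem_desc).2 ⟨hq, h1, h2⟩⟩

lemma sum_desc {m m' : ℕ} (h : m ≤ m') (f : ℝ × ℝ → ℝ) :
    ∑ q ∈ B.Br m', f q = ∑ p ∈ B.Br m, ∑ q ∈ B.desc m' p, f q := by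
  classical
  rw [← B.biUnion_desc h, Finset.sum_biUnion]
  intro p hp p' hp' hne
  exact B.desc_pairwise m m' h p hp p' hp' hne

lemma card_desc {m m' : ℕ} (h : m ≤ m') :
    (B.Br m').card = ∑ p ∈ B.Br m, (B.desc m' p).card := by
  classical
  conv_lhs => rw [← B.biUnion_desc h]
  exact Finset.card_biUnion (B.desc_pairwise m m' h)

end BranchSeq

-- ===== auxiliary development (E) =====

open Set Filter Metric

namespace BranchSeq

variable {S : HPS} {χ : ℝ} (B : BranchSeq S χ)

lemma star_in_branch_right {m k : ℕ} (hmk : m ≤ S.mIdx χ k) {q : ℝ × ℝ}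
    (hq : q ∈ B.Br m) {τ : List ℕ} (hτl : τ.length = k) (hτv : ValidWord S.n τ)
    (he : q.2 = S.bStar τ) : q.1 ≤ S.aStar τ := by
  have hmem := B.mem_Br_levels hτl hτv
  obtain ⟨r, hr, hr1, hr2⟩ := B.desc_exists hmk hmem
  simp only at hr1 hr2
  have hltq := B.lt m q hq
  have hstar := S.aStar_lt_bStar hτv
  set x := max q.1 (S.aStar τ) with hx
  have hxlt : x < S.bStar τ := by
    rw [hx]; apply max_lt; · rw [← he]; exact hltq
    · exact hstar
  set y := (x + S.bStar τ) / 2 with hy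
  have hy1 : x < y := by rw [hy]; linarith
  have hy2 : y < S.bStar τ := by rw [hy]; linarith
  have hyq : y ∈ Set.Ioo q.1 q.2 := ⟨lt_of_le_of_lt (le_max_left _ _) hy1, by rw [he]; exact hy2⟩
  have hyr : y ∈ Set.Ioo r.1 r.2 :=
    ⟨lt_of_le_of_lt (le_trans hr1 (le_max_right _ _)) hy1, lt_of_lt_of_le hy2 hr2⟩
  have := B.eq_of_mem_Ioo hq hr hyq hyr
  rw [this]
  exact hr1

lemma star_in_branch_left {m k : ℕ} (hmk : m ≤ S.mIdx χ k) {q : ℝ × ℝ}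
    (hq : q ∈ B.Br m) {τ : List ℕ} (hτl : τ.length = k) (hτv : ValidWord S.n τ)
    (he : q.1 = S.aStar τ) : S.bStar τ ≤ q.2 := by
  have hmem := B.mem_Br_levels hτl hτv
  obtain ⟨r, hr, hr1, hr2⟩ := B.desc_exists hmk hmem
  simp only at hr1 hr2
  have hltq := B.lt m q hq
  have hstar := S.aStar_lt_bStar hτv
  set x := min q.2 (S.bStar τ) with hx
  have hxgt : S.aStar τ < x := by
    rw [hx]; apply lt_min; · rw [← he]; exact hltq
    · exact hstar
  set y := (S.aStar τ + x) / 2 with hy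
  have hy1 : y < x := by rw [hy]; linarith
  have hy2 : S.aStar τ < y := by rw [hy]; linarith
  have hyq : y ∈ Set.Ioo q.1 q.2 := ⟨by rw [he]; exact hy2, lt_of_lt_of_le hy1 (min_le_left _ _)⟩

  have hyr : y ∈ Set.Ioo r.1 r.2 :=
    ⟨lt_of_le_of_lt hr1 hy2,
      lt_of_lt_of_le (lt_of_lt_of_le hy1 (min_le_right _ _)) hr2⟩
  have := B.eq_of_mem_Ioo hq hr hyq hyr
  rw [this]
  exact hr2

lemma branch_in_star {m k : ℕ} (h : S.mIdx χ k ≤ m) {p : ℝ × ℝ} (hp : p ∈ B.Br m) :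
    ∃ ρ : List ℕ, ρ.length = k ∧ ValidWord S.n ρ ∧ S.aStar ρ ≤ p.1 ∧ p.2 ≤ S.bStar ρ := by
  obtain ⟨P, hP, h1, h2⟩ := B.desc_exists h hp
  obtain ⟨ρ, hρl, hρv, rfl⟩ := B.levels_mem hP
  exact ⟨ρ, hρl, hρv, h1, h2⟩

lemma card_desc_levels {k : ℕ} (hk : 1 ≤ k) {P : ℝ × ℝ}
    (hP : P ∈ B.Br (S.mIdx χ (k - 1))) : (B.desc (S.mIdx χ k) P).card = S.n k := by
  obtain ⟨ρ, hρl, hρv, rfl⟩ := B.levels_mem hP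
  have hρl1 : ρ.length + 1 = k := by omega
  have hset : B.desc (S.mIdx χ k) (S.aStar ρ, S.bStar ρ) =
      (Finset.Icc 1 (S.n k)).image (fun l => (S.aStar (ρ ++ [l]), S.bStar (ρ ++ [l]))) := by
    ext q
    rw [B.mem_desc, Finset.mem_image]
    constructor
    · rintro ⟨hqBr, h1, h2⟩
      obtain ⟨σ, hσl, hσv, rfl⟩ := B.levels_mem hqBr
      simp only at h1 h2
      have hsub : Set.Icc (S.aStar σ) (S.bStar σ) ⊆ Set.Icc (S.aStar ρ) (S.bStar ρ) :=
        Set.Icc_subset_Icc h1 h2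
      have hdl : σ.dropLast = ρ := S.dropLast_eq_of_star_subset hσv hρv (by omega) hsub
      have hσne : σ ≠ [] := by
        intro h0; rw [h0] at hσl; simp at hσl; omega
      have hσeq : σ = ρ ++ [σ.getLast hσne] := by
        conv_lhs => rw [← List.dropLast_append_getLast hσne]
        rw [hdl]
      have hlast : 1 ≤ σ.getLast hσne ∧ σ.getLast hσne ≤ S.n (ρ.length + 1) :=
        HPS.last_of_append (by rw [← hσeq]; exact hσv)
      refine ⟨σ.getLast hσne, Finset.mem_Icc.2 ⟨hlast.1, by rw [← hρl1]; exact hlast.2⟩, ?_⟩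
      rw [← hσeq]
    · rintro ⟨l, hl, rfl⟩
      rw [Finset.mem_Icc] at hl
      have hln : l ≤ S.n (ρ.length + 1) := by rw [hρl1]; exact hl.2
      have hv : ValidWord S.n (ρ ++ [l]) := HPS.valid_append hρv hl.1 hln
      have hlen : (ρ ++ [l]).length = k := by simp; omega
      have hsub := S.star_child_subset hρv hl.1 hln
      exact ⟨B.mem_Br_levels hlen hv, hsub.1, hsub.2⟩
  rw [hset, Finset.card_image_of_injOn, Nat.card_Icc]
  · omega
  · intro l hl l' hl' heq
    rw [Finset.coe_Icc, Set.mem_Icc] at hl hl'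
    by_contra hne
    have key : ∀ a b : ℕ, 1 ≤ a → b ≤ S.n (ρ.length + 1) → a < b →
        S.aStar (ρ ++ [a]) < S.aStar (ρ ++ [b]) := by
      intro a b ha hb hab
      have hs := S.sibling_order hρv ha hab hb
      have h1 : S.aStar (ρ ++ [a]) < S.bStar (ρ ++ [a]) :=
        S.aStar_lt_bStar (HPS.valid_append hρv ha (by omega))
      have h2 := S.bStar_le_b (σ := ρ ++ [a])
      have h3 := S.a_le_aStar (σ := ρ ++ [b])
      linarith
    rcases Nat.lt_or_ge l l' with h | h
    · have := key l l' hl.1 (by rw [hρl1]; exact hl'.2) h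
      have h2 := congrArg Prod.fst heq
      simp only at h2
      rw [h2] at this; exact lt_irrefl _ this
    · have hll : l' < l := by omega
      have := key l' l hl'.1 (by rw [hρl1]; exact hl.2) hll
      have h2 := congrArg Prod.fst heq
      simp only at h2
      rw [h2] at this; exact lt_irrefl _ this

lemma card_desc_intermediate {m k : ℕ} (hm1 : 1 ≤ m) (hk : 1 ≤ k)
    (h1 : S.mIdx χ (k - 1) < m) (h2 : m < S.mIdx χ k) {p : ℝ × ℝ}
    (hp : p ∈ B.Br (m - 1)) : (B.desc m p).card = Mconst χ := by
  have hex := B.exactM k hk m h1 h2 p hp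
  have hset : {q ∈ (B.Br m : Set (ℝ × ℝ)) | Set.Icc q.1 q.2 ⊆ Set.Icc p.1 p.2} =
      ↑(B.desc m p) := by
    ext q
    simp only [Set.mem_setOf_eq, Finset.mem_coe, B.mem_desc]
    constructor
    · rintro ⟨hq, hsub⟩
      rw [Set.Icc_subset_Icc_iff (B.lt m q hq).le] at hsub
      exact ⟨hq, hsub⟩
    · rintro ⟨hq, hsub⟩
      exact ⟨hq, Set.Icc_subset_Icc hsub.1 hsub.2⟩
  rw [hset, Set.ncard_coe_finset] at hex
  exact hex

lemma card_Br_pow {k : ℕ} (hk : 1 ≤ k) :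
    ∀ j : ℕ, S.mIdx χ (k - 1) + j < S.mIdx χ k →
      (B.Br (S.mIdx χ (k - 1) + j)).card = Mconst χ ^ j * (B.Br (S.mIdx χ (k - 1))).card := by
  intro j
  induction j with
  | zero => intro _; simp
  | succ j ih =>
    intro hj
    have hj' : S.mIdx χ (k - 1) + j < S.mIdx χ k := by omega
    have step : (B.Br (S.mIdx χ (k - 1) + (j + 1))).card =
        Mconst χ * (B.Br (S.mIdx χ (k - 1) + j)).card := by
      have hm1 : 1 ≤ S.mIdx χ (k - 1) + (j + 1) := by omega
      have := B.card_desc (m := S.mIdx χ (k - 1) + (j + 1) - 1)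
        (m' := S.mIdx χ (k - 1) + (j + 1)) (by omega)
      rw [this]
      have hmm : S.mIdx χ (k - 1) + (j + 1) - 1 = S.mIdx χ (k - 1) + j := by omega
      rw [hmm]
      rw [Finset.sum_congr rfl (fun p hp => B.card_desc_intermediate hm1 hk (by omega) hj
        (by rw [hmm]; exact hp))]
      rw [Finset.sum_const, smul_eq_mul]
      ring
    rw [step, ih hj', pow_succ]
    ring

lemma two_mul_card_le (hχ : 1 ≤ χ) {m : ℕ} (hm : 1 ≤ m) :
    2 * (B.Br (m - 1)).card ≤ (B.Br m).card := by
  obtain ⟨hk1, hlow, hhigh⟩ := S.kOf_spec χ (m := m) hm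
  set k := S.kOf χ m with hkdef
  have hM3 := Mconst_ge_three hχ
  rcases Nat.lt_or_ge m (S.mIdx χ k) with hint | htrans
  · -- intermediate step
    have hcard := B.card_desc (m := m - 1) (m' := m) (by omega)
    rw [hcard]
    rw [Finset.sum_congr rfl (fun p hp => B.card_desc_intermediate hm hk1 hlow hint hp)]
    rw [Finset.sum_const, smul_eq_mul]
    have hpos : 1 ≤ (B.Br (m - 1)).card := Finset.card_pos.2 (B.nonempty (m - 1))
    nlinarith
  · -- transition step: m = mIdx χ k
    have heq : m = S.mIdx χ k := by omega
    have hsucc : S.mIdx χ k = S.mIdx χ (k - 1) + S.ik χ k := by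
      have := S.mIdx_succ χ (k - 1)
      rw [show k - 1 + 1 = k by omega] at this
      exact this
    have hik1 := S.ik_ge_one χ k
    -- card of Br m
    have hcardm : (B.Br m).card = S.n k * (B.Br (S.mIdx χ (k - 1))).card := by
      rw [heq, B.card_desc (m := S.mIdx χ (k - 1)) (m' := S.mIdx χ k)
        (by rw [hsucc]; omega)]
      rw [Finset.sum_congr rfl (fun P hP => B.card_desc_levels hk1 hP)]
      rw [Finset.sum_const, smul_eq_mul]
      ring
    -- card of Br (m-1)
    have hcardm1 : (B.Br (m - 1)).card =
        Mconst χ ^ (S.ik χ k - 1) * (B.Br (S.mIdx χ (k - 1))).card := by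
      have hm1eq : m - 1 = S.mIdx χ (k - 1) + (S.ik χ k - 1) := by omega
      rw [hm1eq]
      exact B.card_Br_pow hk1 (S.ik χ k - 1) (by omega)
    rw [hcardm, hcardm1]
    rw [← Nat.mul_assoc]
    apply Nat.mul_le_mul_right
    exact S.n_ge_two_mul_pow hχ hk1
end BranchSeq

-- ===== auxiliary development (F) =====

open Set Filter Metric

namespace BranchSeq

variable {S : HPS} {χ : ℝ} (B : BranchSeq S χ)

/-- key gap lemma: the gap between two "consecutive" branches of `H_m` inside a
branch `p` of `H_{m-1}` is at least `α̲*_k`. -/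
lemma gap_ge {m : ℕ} (hm : 1 ≤ m) {p q1 q2 : ℝ × ℝ}
    (hp : p ∈ B.Br (m - 1)) (hq1 : q1 ∈ B.Br m) (hq2 : q2 ∈ B.Br m)
    (hq1p : p.1 ≤ q1.1 ∧ q1.2 ≤ p.2) (hq2p : p.1 ≤ q2.1 ∧ q2.2 ≤ p.2)
    (hord : q1.2 ≤ q2.1)
    (hno : ∀ q ∈ B.Br m, p.1 ≤ q.1 → q.2 ≤ p.2 →
      Set.Icc q.1 q.2 ∩ Set.Ioo q1.2 q2.1 = ∅) :
    S.alphaLo (S.kOf χ m) ≤ q2.1 - q1.2 := by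
  obtain ⟨hk1, hlow, hhigh⟩ := S.kOf_spec χ (m := m) hm
  set k := S.kOf χ m with hkdef
  have hlt1 := B.lt m q1 hq1
  have hlt2 := B.lt m q2 hq2
  -- words describing the facing endpoints
  have hτex : ∃ τ : List ℕ, τ.length = k ∧ ValidWord S.n τ ∧ q1.2 = S.bStar τ ∧
      q1.1 ≤ S.aStar τ := by
    rcases Nat.lt_or_ge m (S.mIdx χ k) with hint | htr
    · obtain ⟨σ, τ, hσl, hτl, hσv, hτv, he1, he2⟩ := B.hull k hk1 m hlow hint q1 hq1
      exact ⟨τ, hτl, hτv, he2, B.star_in_branch_right hhigh hq1 hτl hτv he2⟩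
    · have heq : m = S.mIdx χ k := by omega
      obtain ⟨σ, hσl, hσv, hqe⟩ := B.levels_mem (by rw [← heq]; exact hq1)
      exact ⟨σ, hσl, hσv, by rw [hqe], by rw [hqe]⟩
  have hσex : ∃ σ' : List ℕ, σ'.length = k ∧ ValidWord S.n σ' ∧ q2.1 = S.aStar σ' ∧
      S.bStar σ' ≤ q2.2 := by
    rcases Nat.lt_or_ge m (S.mIdx χ k) with hint | htr
    · obtain ⟨σ, τ, hσl, hτl, hσv, hτv, he1, he2⟩ := B.hull k hk1 m hlow hint q2 hq2
      exact ⟨σ, hσl, hσv, he1, B.star_in_branch_left hhigh hq2 hσl hσv he1⟩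
    · have heq : m = S.mIdx χ k := by omega
      obtain ⟨σ, hσl, hσv, hqe⟩ := B.levels_mem (by rw [← heq]; exact hq2)
      exact ⟨σ, hσl, hσv, by rw [hqe], by rw [hqe]⟩
  obtain ⟨τ, hτl, hτv, hτe, hτa⟩ := hτex
  obtain ⟨σ', hσ'l, hσ'v, hσ'e, hσ'b⟩ := hσex
  -- the common parent word
  obtain ⟨ρ, hρl, hρv, hρ1, hρ2⟩ := B.branch_in_star (k := k - 1)
    (by have := S.mIdx_mono χ (show k - 1 ≤ k by omega); omega) hp
  have hρl1 : ρ.length + 1 = k := by omega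
  have hτdl : τ.dropLast = ρ := by
    apply S.dropLast_eq_of_star_subset hτv hρv (by omega)
    apply Set.Icc_subset_Icc
    · calc S.aStar ρ ≤ p.1 := hρ1
      _ ≤ q1.1 := hq1p.1
      _ ≤ S.aStar τ := hτa
    · calc S.bStar τ = q1.2 := hτe.symm
      _ ≤ p.2 := hq1p.2
      _ ≤ S.bStar ρ := hρ2
  have hσ'dl : σ'.dropLast = ρ := by
    apply S.dropLast_eq_of_star_subset hσ'v hρv (by omega)
    apply Set.Icc_subset_Icc
    · calc S.aStar ρ ≤ p.1 := hρ1
      _ ≤ q2.1 := hq2p.1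
      _ = S.aStar σ' := hσ'e
    · calc S.bStar σ' ≤ q2.2 := hσ'b
      _ ≤ p.2 := hq2p.2
      _ ≤ S.bStar ρ := hρ2
  have hτne : τ ≠ [] := by intro h0; rw [h0] at hτl; simp at hτl; omega
  have hσ'ne : σ' ≠ [] := by intro h0; rw [h0] at hσ'l; simp at hσ'l; omega
  set l := τ.getLast hτne with hldef
  set l' := σ'.getLast hσ'ne with hl'def
  have hτeq : τ = ρ ++ [l] := by
    conv_lhs => rw [← List.dropLast_append_getLast hτne]
    rw [hτdl]
  have hσ'eq : σ' = ρ ++ [l'] := by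
    conv_lhs => rw [← List.dropLast_append_getLast hσ'ne]
    rw [hσ'dl]
  have hlb : 1 ≤ l ∧ l ≤ S.n (ρ.length + 1) :=
    HPS.last_of_append (by rw [← hτeq]; exact hτv)
  have hl'b : 1 ≤ l' ∧ l' ≤ S.n (ρ.length + 1) :=
    HPS.last_of_append (by rw [← hσ'eq]; exact hσ'v)
  rw [hτeq] at hτe
  rw [hσ'eq] at hσ'e
  -- l < l'
  have hll' : l < l' := by
    by_contra hcon
    push_neg at hcon
    rcases Nat.lt_or_ge l' l with hlt | hge
    · have hs := S.sibling_order hρv hl'b.1 hlt hlb.2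
      have h1 := S.aStar_lt_bStar (σ := ρ ++ [l']) (HPS.valid_append hρv hl'b.1 hl'b.2)
      have h2 := S.bStar_le_b (σ := ρ ++ [l'])
      have h3 := S.a_le_aStar (σ := ρ ++ [l])
      have h4 := S.aStar_lt_bStar (σ := ρ ++ [l]) (HPS.valid_append hρv hlb.1 hlb.2)
      rw [hτe] at hord
      rw [hσ'e] at hord
      linarith
    · have hle : l = l' := by omega
      rw [hle] at hτe
      have h1 := S.aStar_lt_bStar (σ := ρ ++ [l']) (HPS.valid_append hρv hl'b.1 hl'b.2)
      rw [hτe, hσ'e] at hord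
      linarith
  -- l' = l + 1
  have hsucc : l' = l + 1 := by
    by_contra hcon
    have hmidb : 1 ≤ l + 1 ∧ l + 1 ≤ S.n (ρ.length + 1) := ⟨by omega, by omega⟩
    have hmidv : ValidWord S.n (ρ ++ [l + 1]) := HPS.valid_append hρv hmidb.1 hmidb.2
    have hmidl : (ρ ++ [l + 1]).length = k := by simp; omega
    have hmidmem := B.mem_Br_levels (χ := χ) hmidl hmidv
    obtain ⟨Bm, hBm, hBm1, hBm2⟩ := B.desc_exists hhigh hmidmem
    simp only at hBm1 hBm2
    have hmidlt := S.aStar_lt_bStar hmidv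
    -- position of the middle star interval
    have hpos1 : S.bStar (ρ ++ [l]) ≤ S.aStar (ρ ++ [l + 1]) := by
      have hs := S.sibling_order hρv hlb.1 (Nat.lt_succ_self l) hmidb.2
      have h2 := S.bStar_le_b (σ := ρ ++ [l])
      have h3 := S.a_le_aStar (σ := ρ ++ [l + 1])
      linarith
    have hpos2 : S.bStar (ρ ++ [l + 1]) ≤ S.aStar (ρ ++ [l']) := by
      have hs := S.sibling_order hρv hmidb.1 (by omega) hl'b.2
      have h2 := S.bStar_le_b (σ := ρ ++ [l + 1])
      have h3 := S.a_le_aStar (σ := ρ ++ [l'])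
      linarith
    set y := (S.aStar (ρ ++ [l + 1]) + S.bStar (ρ ++ [l + 1])) / 2 with hy
    have hy1 : S.aStar (ρ ++ [l + 1]) < y := by rw [hy]; linarith
    have hy2 : y < S.bStar (ρ ++ [l + 1]) := by rw [hy]; linarith
    have hygap : y ∈ Set.Ioo q1.2 q2.1 := by
      constructor
      · rw [hτe]; linarith
      · rw [hσ'e]; linarith
    have hyBm : y ∈ Set.Icc Bm.1 Bm.2 := ⟨by linarith, by linarith⟩
    obtain ⟨P', hP', hP'1, hP'2⟩ := B.desc_exists (show m - 1 ≤ m by omega) hBm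
    by_cases hPp : P' = p
    · rw [hPp] at hP'1 hP'2
      have := hno Bm hBm hP'1 hP'2
      exact absurd (Set.mem_inter hyBm hygap) (by rw [this]; exact notMem_empty y)
    · have hyP' : y ∈ Set.Ioo P'.1 P'.2 := ⟨by linarith, by linarith⟩
      have hyp : y ∈ Set.Ioo p.1 p.2 := by
        constructor
        · have : p.1 ≤ q1.1 := hq1p.1
          have := hygap.1
          linarith
        · have : q2.2 ≤ p.2 := hq2p.2
          have := hygap.2
          linarith
      exact hPp (B.eq_of_mem_Ioo hP' hp hyP' hyp)
  -- conclude
  rw [hσ'e, hτe, hsucc]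
  have hgap := S.star_gap hρv hlb.1 (by omega)
  rw [hgap, hρl1]
  have hln : l + 1 ≤ S.n k := by rw [← hρl1]; omega
  exact S.alphaLo_le hlb.1 (by omega)

end BranchSeq

-- ===== auxiliary development (G) =====

open Set Filter Metric

namespace BranchSeq

variable {S : HPS} {χ : ℝ} (B : BranchSeq S χ)

lemma loss_aux {m : ℕ} (hm : 1 ≤ m) {p : ℝ × ℝ} (hp : p ∈ B.Br (m - 1)) :
    ∀ T : Finset (ℝ × ℝ), T ⊆ B.desc m p → ∀ hne : T.Nonempty,
    (∀ q ∈ B.desc m p, q ∉ T → ∀ z ∈ T, z.2 ≤ q.1) →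
    (∑ q ∈ T, (q.2 - q.1)) + ((T.card : ℝ) - 1) * S.alphaLo (S.kOf χ m) ≤
      T.sup' hne (fun q => q.2) - T.inf' hne (fun q => q.1) := by
  have hk1 := (S.kOf_spec χ (m := m) hm).1
  set g := S.alphaLo (S.kOf χ m) with hgdef
  have hg : 0 ≤ g := S.alphaLo_nonneg hk1
  intro T
  induction T using Finset.strongInduction with
  | _ T IH =>
    intro hTsub hne hinv
    obtain ⟨qs, hqs, hqsup⟩ := Finset.exists_mem_eq_sup' hne (fun q : ℝ × ℝ => q.2)
    rcases Finset.eq_singleton_or_nontrivial hqs with hsing | hnontriv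
    · subst hsing
      simp
    · have hcard2 : 2 ≤ T.card := Finset.one_lt_card_iff_nontrivial.mpr hnontriv
      set T' := T.erase qs with hT'def
      have hT'ne : T'.Nonempty := (Finset.erase_nonempty hqs).2 hnontriv
      have hT'ss : T' ⊂ T := Finset.erase_ssubset hqs
      have hT'sub : T' ⊆ B.desc m p := (hT'ss.subset).trans hTsub
      -- everything in T' is to the left of qs
      have hright : ∀ z ∈ T', z.2 ≤ qs.1 := by
        intro z hz
        have hzT : z ∈ T := hT'ss.subset hz
        have hzne : z ≠ qs := Finset.ne_of_mem_erase hz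
        have hzBr : z ∈ B.Br m := ((B.mem_desc).1 (hTsub hzT)).1
        have hqsBr : qs ∈ B.Br m := ((B.mem_desc).1 (hTsub hqs)).1
        have hzlt := B.lt m z hzBr
        have hzsup : z.2 ≤ qs.2 := by rw [← hqsup]; exact Finset.le_sup' _ hzT
        by_contra hcon
        push_neg at hcon
        set x := max z.1 qs.1 with hx
        have hxlt : x < z.2 := max_lt hzlt hcon
        set y := (x + z.2) / 2 with hy
        have hy1 : x < y := by rw [hy]; linarith
        have hy2 : y < z.2 := by rw [hy]; linarith
        have hyz : y ∈ Set.Ioo z.1 z.2 := ⟨lt_of_le_of_lt (le_max_left _ _) hy1, hy2⟩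
        have hyqs : y ∈ Set.Ioo qs.1 qs.2 :=
          ⟨lt_of_le_of_lt (le_max_right _ _) hy1, lt_of_lt_of_le hy2 hzsup⟩
        exact hzne (B.eq_of_mem_Ioo hzBr hqsBr hyz hyqs)
      -- invariant for T'
      have hinv' : ∀ q ∈ B.desc m p, q ∉ T' → ∀ z ∈ T', z.2 ≤ q.1 := by
        intro q hq hqT' z hz
        by_cases hqqs : q = qs
        · rw [hqqs]; exact hright z hz
        · have hqT : q ∉ T := by
            intro hqT
            exact hqT' (Finset.mem_erase.2 ⟨hqqs, hqT⟩)
          exact hinv q hq hqT z (hT'ss.subset hz)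
      have hIH := IH T' hT'ss hT'sub hT'ne hinv'
      obtain ⟨q', hq', hq'sup⟩ := Finset.exists_mem_eq_sup' hT'ne (fun q : ℝ × ℝ => q.2)
      -- the gap between q' and qs
      have hgap : g ≤ qs.1 - q'.2 := by
        have hq'desc := (B.mem_desc).1 (hTsub (hT'ss.subset hq'))
        have hqsdesc := (B.mem_desc).1 (hTsub hqs)
        have happ := B.gap_ge hm hp hq'desc.1 hqsdesc.1 hq'desc.2 hqsdesc.2
          (hright q' hq')
          (fun q hqBr hq1 hq2 => by
            have hqdesc : q ∈ B.desc m p := (B.mem_desc).2 ⟨hqBr, hq1, hq2⟩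
            by_cases hqT' : q ∈ T'
            · have : q.2 ≤ q'.2 := by rw [← hq'sup]; exact Finset.le_sup' _ hqT'
              apply Set.eq_empty_iff_forall_notMem.2
              rintro x ⟨⟨hx1, hx2⟩, ⟨hx3, hx4⟩⟩
              linarith
            · by_cases hqqs : q = qs
              · apply Set.eq_empty_iff_forall_notMem.2
                rintro x ⟨⟨hx1, hx2⟩, ⟨hx3, hx4⟩⟩
                rw [hqqs] at hx1
                linarith
              · have hqT : q ∉ T := by
                  intro hqT
                  exact hqT' (Finset.mem_erase.2 ⟨hqqs, hqT⟩)
                have := hinv q hqdesc hqT qs hqs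
                have hqslt : qs.1 < qs.2 :=
                  B.lt m qs hqsdesc.1
                apply Set.eq_empty_iff_forall_notMem.2
                rintro x ⟨⟨hx1, hx2⟩, ⟨hx3, hx4⟩⟩
                linarith)
        linarith
      -- assemble
      have hsum : ∑ q ∈ T, (q.2 - q.1) = (∑ q ∈ T', (q.2 - q.1)) + (qs.2 - qs.1) := by
        rw [hT'def, Finset.sum_erase_add _ _ hqs]
      have hcard : (T.card : ℝ) = (T'.card : ℝ) + 1 := by
        rw [hT'def]
        rw [← Finset.card_erase_add_one hqs]
        push_cast
        ring
      have hinfle : T.inf' hne (fun q => q.1) ≤ T'.inf' hT'ne (fun q => q.1) :=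
        Finset.le_inf' _ _ (fun z hz => Finset.inf'_le _ (hT'ss.subset hz))
      have hsupT : T.sup' hne (fun q => q.2) = qs.2 := hqsup
      have hq'T' : T'.sup' hT'ne (fun q => q.2) = q'.2 := hq'sup
      rw [hsum, hcard, hsupT]
      rw [hq'T'] at hIH
      have hqslt : qs.1 < qs.2 := B.lt m qs ((B.mem_desc).1 (hTsub hqs)).1
      nlinarith [hIH, hgap, hinfle]

lemma branch_loss {m : ℕ} (hm : 1 ≤ m) {p : ℝ × ℝ} (hp : p ∈ B.Br (m - 1)) :
    (∑ q ∈ B.desc m p, (q.2 - q.1)) +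
      (((B.desc m p).card : ℝ) - 1) * S.alphaLo (S.kOf χ m) ≤ p.2 - p.1 := by
  have hk1 := (S.kOf_spec χ (m := m) hm).1
  have hg : 0 ≤ S.alphaLo (S.kOf χ m) := S.alphaLo_nonneg hk1
  have hplt := B.lt (m - 1) p hp
  rcases Finset.eq_empty_or_nonempty (B.desc m p) with he | hne
  · rw [he]
    simp
    nlinarith
  · have := B.loss_aux hm hp (B.desc m p) le_rfl hne (fun q hq hq2 z hz => absurd hq hq2)
    have hsup : (B.desc m p).sup' hne (fun q => q.2) ≤ p.2 :=
      Finset.sup'_le _ _ (fun q hq => ((B.mem_desc).1 hq).2.2)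
    have hinf : p.1 ≤ (B.desc m p).inf' hne (fun q => q.1) :=
      Finset.le_inf' _ _ (fun q hq => ((B.mem_desc).1 hq).2.1)
    linarith

/-- the key step inequality: `l(H_m) ≤ (1 - γ(m)) l(H_{m-1})`. -/
lemma len_step (hχ : 1 ≤ χ) {m : ℕ} (hm : 1 ≤ m) :
    B.len m ≤ (1 - B.gam m) * B.len (m - 1) := by
  have hk1 := (S.kOf_spec χ (m := m) hm).1
  set g := S.alphaLo (S.kOf χ m) with hgdef
  have hg : 0 ≤ g := S.alphaLo_nonneg hk1
  have hmaxpos := B.maxLen_pos (m - 1)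
  have hgam : B.gam m = g / B.maxLen (m - 1) := rfl
  -- summing branch losses
  have h1 : B.len m + (((B.Br m).card : ℝ) - ((B.Br (m - 1)).card : ℝ)) * g ≤
      B.len (m - 1) := by
    have hsum : B.len m = ∑ p ∈ B.Br (m - 1), ∑ q ∈ B.desc m p, (q.2 - q.1) := by
      unfold len
      exact B.sum_desc (by omega) _
    have hcard : ((B.Br m).card : ℝ) = ∑ p ∈ B.Br (m - 1), ((B.desc m p).card : ℝ) := by
      rw [B.card_desc (m := m - 1) (m' := m) (by omega)]
      push_cast
      rfl
    have hlen1 : B.len (m - 1) = ∑ p ∈ B.Br (m - 1), (p.2 - p.1) := rfl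
    have hexp : ∑ p ∈ B.Br (m-1), ((((B.desc m p).card : ℝ) - 1) * g) =
        (∑ p ∈ B.Br (m-1), ((B.desc m p).card : ℝ)) * g
          - ((B.Br (m-1)).card : ℝ) * g := by
      simp only [sub_mul, one_mul, Finset.sum_sub_distrib, Finset.sum_const, nsmul_eq_mul]
      rw [Finset.sum_mul]
    have hmain := Finset.sum_le_sum (fun p hp => B.branch_loss hm hp)
    rw [Finset.sum_add_distrib, hexp] at hmain
    rw [hsum, hcard, hlen1, sub_mul]
    linarith [hmain]
  -- N_m ≥ 2 N_{m-1}
  have h2 : 2 * ((B.Br (m - 1)).card : ℝ) ≤ ((B.Br m).card : ℝ) := by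
    exact_mod_cast B.two_mul_card_le hχ hm
  have h3 : B.len m + ((B.Br (m - 1)).card : ℝ) * g ≤ B.len (m - 1) := by
    nlinarith
  -- relate to γ(m)
  have h4 : B.len (m - 1) ≤ ((B.Br (m - 1)).card : ℝ) * B.maxLen (m - 1) :=
    B.len_le_card_mul_maxLen (m - 1)
  have h5 : B.gam m * B.len (m - 1) ≤ ((B.Br (m - 1)).card : ℝ) * g := by
    rw [hgam, div_mul_eq_mul_div, div_le_iff₀ hmaxpos]
    calc g * B.len (m - 1) ≤ g * (((B.Br (m - 1)).card : ℝ) * B.maxLen (m - 1)) :=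
      mul_le_mul_of_nonneg_left h4 hg
    _ = ((B.Br (m - 1)).card : ℝ) * g * B.maxLen (m - 1) := by ring
  have hfin : (1 - B.gam m) * B.len (m - 1) =
      B.len (m - 1) - B.gam m * B.len (m - 1) := by ring
  rw [hfin]
  linarith

lemma gam_nonneg {m : ℕ} (hm : 1 ≤ m) : 0 ≤ B.gam m := by
  have hk1 := (S.kOf_spec χ (m := m) hm).1
  exact div_nonneg (S.alphaLo_nonneg hk1) (B.maxLen_pos (m - 1)).le

lemma gam_lt_one (hχ : 1 ≤ χ) {m : ℕ} (hm : 1 ≤ m) : B.gam m < 1 := by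
  have h1 := B.len_step hχ hm
  have h2 := B.len_pos m
  have h3 := B.len_pos (m - 1)
  nlinarith

/-- the product bound: `l(H_m) ≤ l(H_0) ∏_{j=1}^m (1 - γ(j))`. -/
lemma len_le_prod (hχ : 1 ≤ χ) (m : ℕ) :
    B.len m ≤ B.len 0 * ∏ j ∈ Finset.Icc 1 m, (1 - B.gam j) := by
  induction m with
  | zero => simp
  | succ m ih =>
    rw [Finset.prod_Icc_succ_top (by omega)]
    have hstep := B.len_step hχ (m := m + 1) (by omega)
    simp only [Nat.add_sub_cancel] at hstep
    have hgam := B.gam_lt_one hχ (m := m + 1) (by omega)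
    have hprodnn : 0 ≤ ∏ j ∈ Finset.Icc 1 m, (1 - B.gam j) := by
      apply Finset.prod_nonneg
      intro j hj
      rw [Finset.mem_Icc] at hj
      have := B.gam_lt_one hχ hj.1
      linarith
    have hlen0 := B.len_pos 0
    calc B.len (m + 1) ≤ (1 - B.gam (m + 1)) * B.len m := hstep
      _ ≤ (1 - B.gam (m + 1)) * (B.len 0 * ∏ j ∈ Finset.Icc 1 m, (1 - B.gam j)) := by
          apply mul_le_mul_of_nonneg_left ih (by linarith)
      _ = B.len 0 * ((∏ j ∈ Finset.Icc 1 m, (1 - B.gam j)) * (1 - B.gam (m + 1))) := by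
          ring

end BranchSeq

-- ===== auxiliary development (H) =====

open Set Filter Metric

lemma neg_log_le_two_mul {x : ℝ} (h0 : 0 ≤ x) (h2 : x ≤ 1/2) :
    -Real.log (1 - x) ≤ 2 * x := by
  have h1 : (0:ℝ) < 1 - x := by linarith
  have ha : 1/(1-x) ≤ 1 + 2*x := by rw [div_le_iff₀ h1]; nlinarith
  have hb : Real.log (1+2*x) ≤ 2*x := by
    have := Real.log_le_sub_one_of_pos (show (0:ℝ) < 1+2*x by linarith)
    linarith
  have hc : -Real.log (1-x) = Real.log (1/(1-x)) := by
    rw [Real.log_div one_ne_zero (ne_of_gt h1), Real.log_one]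
    ring
  rw [hc]
  calc Real.log (1/(1-x)) ≤ Real.log (1+2*x) := Real.log_le_log (by positivity) ha
  _ ≤ 2*x := hb

lemma x_le_neg_log {x : ℝ} (h1 : x < 1) : x ≤ -Real.log (1 - x) := by
  have := Real.log_le_sub_one_of_pos (show (0:ℝ) < 1 - x by linarith)
  linarith

namespace BranchSeq

variable {S : HPS} {χ : ℝ} (B : BranchSeq S χ)

lemma mem_Sfin {ε : ℝ} {m j : ℕ} :
    j ∈ B.Sfin ε m ↔ (1 ≤ j ∧ j ≤ m) ∧ B.gam j ≤ ε := by
  unfold Sfin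
  rw [Finset.mem_filter, Finset.mem_Icc]

lemma sum_gam_le (hχ : 1 ≤ χ) (m : ℕ) :
    ∑ j ∈ Finset.Icc 1 m, B.gam j ≤ Real.log (B.len 0) - Real.log (B.len m) := by
  have hfac : ∀ j ∈ Finset.Icc 1 m, 0 < 1 - B.gam j := by
    intro j hj
    have := B.gam_lt_one hχ (Finset.mem_Icc.1 hj).1
    linarith
  have hprod_pos : 0 < ∏ j ∈ Finset.Icc 1 m, (1 - B.gam j) :=
    Finset.prod_pos hfac
  have hlogle : Real.log (B.len m) ≤
      Real.log (B.len 0) + ∑ j ∈ Finset.Icc 1 m, Real.log (1 - B.gam j) := by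
    calc Real.log (B.len m)
        ≤ Real.log (B.len 0 * ∏ j ∈ Finset.Icc 1 m, (1 - B.gam j)) :=
          Real.log_le_log (B.len_pos m) (B.len_le_prod hχ m)
      _ = Real.log (B.len 0) + Real.log (∏ j ∈ Finset.Icc 1 m, (1 - B.gam j)) :=
          Real.log_mul (ne_of_gt (B.len_pos 0)) (ne_of_gt hprod_pos)
      _ = Real.log (B.len 0) + ∑ j ∈ Finset.Icc 1 m, Real.log (1 - B.gam j) := by
          rw [Real.log_prod (fun j hj => ne_of_gt (hfac j hj))]
  have hterm : ∀ j ∈ Finset.Icc 1 m, B.gam j ≤ -Real.log (1 - B.gam j) := by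
    intro j hj
    exact x_le_neg_log (B.gam_lt_one hχ (Finset.mem_Icc.1 hj).1)
  calc ∑ j ∈ Finset.Icc 1 m, B.gam j
      ≤ ∑ j ∈ Finset.Icc 1 m, -Real.log (1 - B.gam j) := Finset.sum_le_sum hterm
    _ = -∑ j ∈ Finset.Icc 1 m, Real.log (1 - B.gam j) := by rw [Finset.sum_neg_distrib]
    _ ≤ Real.log (B.len 0) - Real.log (B.len m) := by linarith

lemma sum_rpow_le (hχ : 1 ≤ χ) {p ε : ℝ} (hp : 0 < p) (hε1 : ε < 1) (m : ℕ)
    {δ : ℝ} (hδ : 0 < δ) (hδε : δ ≤ ε) :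
    ∑ j ∈ B.Sfin ε m, (B.gam j) ^ p ≤
      (∑ j ∈ Finset.Icc 1 m, B.gam j) / δ + (m : ℝ) * δ ^ p := by
  classical
  have hS_sub : B.Sfin ε m ⊆ Finset.Icc 1 m := Finset.filter_subset _ _
  have hgam_nn : ∀ j ∈ Finset.Icc 1 m, 0 ≤ B.gam j := fun j hj =>
    B.gam_nonneg (Finset.mem_Icc.1 hj).1
  set T1 := (B.Sfin ε m).filter (fun j => δ ≤ B.gam j) with hT1
  set T2 := (B.Sfin ε m).filter (fun j => ¬ δ ≤ B.gam j) with hT2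
  have hsplit : ∑ j ∈ T1, (B.gam j) ^ p + ∑ j ∈ T2, (B.gam j) ^ p =
      ∑ j ∈ B.Sfin ε m, (B.gam j) ^ p :=
    Finset.sum_filter_add_sum_filter_not _ _ _
  have hbound1 : ∑ j ∈ T1, (B.gam j) ^ p ≤ (∑ j ∈ Finset.Icc 1 m, B.gam j) / δ := by
    have hone : ∀ j ∈ T1, (B.gam j) ^ p ≤ 1 := by
      intro j hj
      have hjS := Finset.mem_filter.1 hj
      have hjm := (B.mem_Sfin.1 hjS.1)
      exact Real.rpow_le_one (B.gam_nonneg hjm.1.1) (le_trans hjm.2 hε1.le) hp.le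
    have hcard : (T1.card : ℝ) * δ ≤ ∑ j ∈ Finset.Icc 1 m, B.gam j := by
      calc (T1.card : ℝ) * δ = ∑ _j ∈ T1, δ := by
            rw [Finset.sum_const, nsmul_eq_mul]
        _ ≤ ∑ j ∈ T1, B.gam j :=
            Finset.sum_le_sum (fun j hj => (Finset.mem_filter.1 hj).2)
        _ ≤ ∑ j ∈ Finset.Icc 1 m, B.gam j := by
            apply Finset.sum_le_sum_of_subset_of_nonneg
              ((Finset.filter_subset _ _).trans hS_sub)
            intro j hj _
            exact hgam_nn j hj
    calc ∑ j ∈ T1, (B.gam j) ^ p ≤ ∑ _j ∈ T1, (1:ℝ) := Finset.sum_le_sum hone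
      _ = (T1.card : ℝ) := by rw [Finset.sum_const, nsmul_eq_mul, mul_one]
      _ ≤ (∑ j ∈ Finset.Icc 1 m, B.gam j) / δ := by
          rw [le_div_iff₀ hδ]
          exact hcard
  have hbound2 : ∑ j ∈ T2, (B.gam j) ^ p ≤ (m : ℝ) * δ ^ p := by
    have hterm : ∀ j ∈ T2, (B.gam j) ^ p ≤ δ ^ p := by
      intro j hj
      have hjf := Finset.mem_filter.1 hj
      have hjm := B.mem_Sfin.1 hjf.1
      push_neg at hjf
      exact Real.rpow_le_rpow (B.gam_nonneg hjm.1.1) (le_of_lt (hjf.2)) hp.le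
    have hcard : T2.card ≤ m := by
      calc T2.card ≤ (B.Sfin ε m).card := Finset.card_filter_le _ _
        _ ≤ (Finset.Icc 1 m).card := Finset.card_le_card hS_sub
        _ = m := by rw [Nat.card_Icc]; omega
    calc ∑ j ∈ T2, (B.gam j) ^ p ≤ ∑ _j ∈ T2, δ ^ p := Finset.sum_le_sum hterm
      _ = (T2.card : ℝ) * δ ^ p := by rw [Finset.sum_const, nsmul_eq_mul]
      _ ≤ (m : ℝ) * δ ^ p := by
          apply mul_le_mul_of_nonneg_right _ (Real.rpow_nonneg hδ.le _)
          exact_mod_cast hcard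
  linarith

lemma abs_log_prod_le {p ε : ℝ} (hp : 0 < p) (hε0 : 0 < ε)
    (hsmall : ε ^ p < 1/2) (m : ℕ) :
    |Real.log (∏ j ∈ B.Sfin ε m, (1 - (B.gam j) ^ p))| ≤
      2 * ∑ j ∈ B.Sfin ε m, (B.gam j) ^ p := by
  have hx : ∀ j ∈ B.Sfin ε m, 0 ≤ (B.gam j) ^ p ∧ (B.gam j) ^ p ≤ 1/2 := by
    intro j hj
    have hjm := B.mem_Sfin.1 hj
    have hnn := B.gam_nonneg hjm.1.1
    refine ⟨Real.rpow_nonneg hnn _, ?_⟩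
    calc (B.gam j) ^ p ≤ ε ^ p := Real.rpow_le_rpow hnn hjm.2 hp.le
      _ ≤ 1/2 := hsmall.le
  have hfac : ∀ j ∈ B.Sfin ε m, 0 < 1 - (B.gam j) ^ p := by
    intro j hj
    have := hx j hj
    linarith [this.2]
  have hlogeq : Real.log (∏ j ∈ B.Sfin ε m, (1 - (B.gam j) ^ p)) =
      ∑ j ∈ B.Sfin ε m, Real.log (1 - (B.gam j) ^ p) :=
    Real.log_prod (fun j hj => ne_of_gt (hfac j hj))
  have hnonpos : ∑ j ∈ B.Sfin ε m, Real.log (1 - (B.gam j) ^ p) ≤ 0 := by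
    apply Finset.sum_nonpos
    intro j hj
    apply Real.log_nonpos (hfac j hj).le
    linarith [(hx j hj).1]
  rw [hlogeq, abs_of_nonpos hnonpos]
  rw [← Finset.sum_neg_distrib]
  rw [Finset.mul_sum]
  apply Finset.sum_le_sum
  intro j hj
  exact neg_log_le_two_mul (hx j hj).1 (hx j hj).2

lemma main_aux (hχ : 1 ≤ χ) (a : ℕ → ℕ) (haT : Filter.Tendsto a Filter.atTop Filter.atTop)
    (hlim : Filter.Tendsto (fun k => (B.len (a k)) ^ (1 / ((a k : ℕ) : ℝ)))
      Filter.atTop (nhds 1))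
    {p : ℝ} (hp : 0 < p) (hp1 : p ≤ 1)
    {ε : ℝ} (hε : ε ∈ Set.Ioo (0 : ℝ) 1) (hsmall : ε ^ p < 1 / 2) :
    Filter.Tendsto
      (fun k => (∏ j ∈ B.Sfin ε (a k), (1 - (B.gam j) ^ p)) ^ (1 / ((a k : ℕ) : ℝ)))
      Filter.atTop (nhds 1) := by
  obtain ⟨hε0, hε1⟩ := hε
  have haR : Tendsto (fun k => ((a k : ℕ) : ℝ)) atTop atTop :=
    tendsto_natCast_atTop_atTop.comp haT
  have hainv : Tendsto (fun k => 1 / ((a k : ℕ) : ℝ)) atTop (nhds 0) :=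
    Tendsto.div_atTop tendsto_const_nhds haR
  -- step 1 : (1/a) log len (a k) → 0
  have h1 : Tendsto (fun k => Real.log ((B.len (a k)) ^ (1 / ((a k : ℕ) : ℝ))))
      atTop (nhds 0) := by
    have hcont := (Real.continuousAt_log (by norm_num : (1:ℝ) ≠ 0)).tendsto.comp hlim
    simpa [Function.comp_def] using hcont
  have hlog : Tendsto (fun k => 1 / ((a k : ℕ) : ℝ) * Real.log (B.len (a k)))
      atTop (nhds 0) := by
    apply h1.congr
    intro k
    rw [Real.log_rpow (B.len_pos _)]
  -- step 2 : (1/a) Σ γ → 0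
  set G : ℕ → ℝ := fun k => 1 / ((a k : ℕ) : ℝ) * ∑ j ∈ Finset.Icc 1 (a k), B.gam j
    with hGdef
  have hGnn : ∀ k, 0 ≤ G k := by
    intro k
    apply mul_nonneg (by positivity)
    apply Finset.sum_nonneg
    intro j hj
    exact B.gam_nonneg (Finset.mem_Icc.1 hj).1
  have hGle : ∀ k, G k ≤ 1 / ((a k : ℕ) : ℝ) * Real.log (B.len 0) -
      1 / ((a k : ℕ) : ℝ) * Real.log (B.len (a k)) := by
    intro k
    have := B.sum_gam_le hχ (a k)
    have hpos : (0:ℝ) ≤ 1 / ((a k : ℕ) : ℝ) := by positivity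
    rw [hGdef]
    calc 1 / ((a k : ℕ) : ℝ) * ∑ j ∈ Finset.Icc 1 (a k), B.gam j
        ≤ 1 / ((a k : ℕ) : ℝ) * (Real.log (B.len 0) - Real.log (B.len (a k))) :=
          mul_le_mul_of_nonneg_left this hpos
      _ = _ := by ring
  have hUpper : Tendsto (fun k => 1 / ((a k : ℕ) : ℝ) * Real.log (B.len 0) -
      1 / ((a k : ℕ) : ℝ) * Real.log (B.len (a k))) atTop (nhds 0) := by
    have h2 := hainv.mul_const (Real.log (B.len 0))
    have := h2.sub hlog
    simpa using this
  have hG : Tendsto G atTop (nhds 0) := by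
    apply tendsto_of_tendsto_of_tendsto_of_le_of_le (tendsto_const_nhds) hUpper hGnn hGle
  -- step 3 : (1/a) log P → 0
  set P : ℕ → ℝ := fun k => ∏ j ∈ B.Sfin ε (a k), (1 - (B.gam j) ^ p) with hPdef
  have hPpos : ∀ k, 0 < P k := by
    intro k
    apply Finset.prod_pos
    intro j hj
    have hjm := B.mem_Sfin.1 hj
    have hnn := B.gam_nonneg hjm.1.1
    have : (B.gam j) ^ p ≤ ε ^ p := Real.rpow_le_rpow hnn hjm.2 hp.le
    linarith
  have hlogP : Tendsto (fun k => 1 / ((a k : ℕ) : ℝ) * Real.log (P k)) atTop (nhds 0) := by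
    rw [Metric.tendsto_atTop]
    intro η hη
    -- choose δ
    set δ := min ε ((η/8) ^ (1/p)) with hδdef
    have hδ0 : 0 < δ := lt_min hε0 (Real.rpow_pos_of_pos (by linarith) _)
    have hδε : δ ≤ ε := min_le_left _ _
    have hδp : δ ^ p ≤ η / 8 := by
      calc δ ^ p ≤ ((η/8) ^ (1/p)) ^ p :=
        Real.rpow_le_rpow hδ0.le (min_le_right _ _) hp.le
      _ = (η/8) ^ ((1/p) * p) := by
          rw [← Real.rpow_mul (by linarith)]
      _ = η / 8 := by
          rw [one_div_mul_cancel (ne_of_gt hp), Real.rpow_one]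
    -- eventual bounds
    have hev1 : ∀ᶠ k in atTop, G k < η * δ / 8 := by
      have := hG
      rw [Metric.tendsto_atTop] at this
      obtain ⟨N, hN⟩ := this (η * δ / 8) (by positivity)
      rw [eventually_atTop]
      refine ⟨N, fun k hk => ?_⟩
      have := hN k hk
      rw [Real.dist_eq, sub_zero, abs_of_nonneg (hGnn k)] at this
      exact this
    have hev2 : ∀ᶠ k in atTop, 1 ≤ a k := haT.eventually_ge_atTop 1
    rw [← eventually_atTop]
    filter_upwards [hev1, hev2] with k hk1 hk2
    have haknn : (1:ℝ) ≤ ((a k : ℕ) : ℝ) := by exact_mod_cast hk2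
    have hak0 : ((a k : ℕ) : ℝ) ≠ 0 := by linarith
    have hakpos : (0:ℝ) < ((a k : ℕ) : ℝ) := by linarith
    -- the chain of bounds
    have hb1 := B.abs_log_prod_le hp hε0 hsmall (a k)
    have hb2 := B.sum_rpow_le hχ hp hε1 (a k) hδ0 hδε
    rw [Real.dist_eq, sub_zero, abs_mul]
    have habs : |1 / ((a k : ℕ) : ℝ)| = 1 / ((a k : ℕ) : ℝ) := abs_of_nonneg (by positivity)
    rw [habs]
    calc 1 / ((a k : ℕ) : ℝ) * |Real.log (P k)|
        ≤ 1 / ((a k : ℕ) : ℝ) * (2 * ∑ j ∈ B.Sfin ε (a k), (B.gam j) ^ p) := by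
          apply mul_le_mul_of_nonneg_left hb1 (by positivity)
      _ ≤ 1 / ((a k : ℕ) : ℝ) *
            (2 * ((∑ j ∈ Finset.Icc 1 (a k), B.gam j) / δ + ((a k : ℕ) : ℝ) * δ ^ p)) := by
          apply mul_le_mul_of_nonneg_left _ (by positivity)
          linarith
      _ = (2 / δ) * G k + 2 * δ ^ p := by
          rw [hGdef]
          field_simp
      _ < (2 / δ) * (η * δ / 8) + 2 * (η / 8) := by
          apply add_lt_add_of_lt_of_le
          · apply mul_lt_mul_of_pos_left hk1 (by positivity)
          · linarith
      _ = η * 2 / 8 + η / 4 := by field_simp; ring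
      _ < η := by linarith
  -- step 4 : conclude
  have hexp := (Real.continuous_exp.tendsto 0).comp hlogP
  rw [Real.exp_zero] at hexp
  apply hexp.congr
  intro k
  simp only [Function.comp_apply]
  rw [Real.rpow_def_of_pos (hPpos k), mul_comm]

end BranchSeq

/-- **Lemma 5.1 (3).** If `{a_k}` is a subsequence of `{m_k - 1}` with
`lim_k (l(H_{a_k}))^{1/a_k} = 1`, then for every `p ∈ (0,1]` and every sufficiently small
`ε ∈ (0,1)` (namely `ε^p < 1/2`),
`lim_k (∏_{j ∈ S_ε(a_k)} (1 - γ(j)^p))^{1/a_k} = 1`. -/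
theorem prod_over_Sfin_pow_tendsto_one
    (S : HPS) (χ : ℝ) (hχ : 1 ≤ χ) (hgap : GapComparable S χ)
    (B : BranchSeq S χ)
    (φ : ℕ → ℕ) (hφ : StrictMono φ)
    (hlim : Filter.Tendsto
      (fun k => (B.len (S.mIdx χ (φ k) - 1)) ^ (1 / ((S.mIdx χ (φ k) - 1 : ℕ) : ℝ)))
      Filter.atTop (nhds 1))
    (p : ℝ) (hp : 0 < p) (hp1 : p ≤ 1)
    (ε : ℝ) (hε : ε ∈ Set.Ioo (0 : ℝ) 1) (hsmall : ε ^ p < 1 / 2) :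
    Filter.Tendsto
      (fun k =>
        (∏ j ∈ B.Sfin ε (S.mIdx χ (φ k) - 1), (1 - (B.gam j) ^ p)) ^
          (1 / ((S.mIdx χ (φ k) - 1 : ℕ) : ℝ)))
      Filter.atTop (nhds 1) := by
  apply B.main_aux hχ (fun k => S.mIdx χ (φ k) - 1) ?_ hlim hp hp1 hε hsmall
  rw [Filter.tendsto_atTop]
  intro b
  rw [Filter.eventually_atTop]
  refine ⟨b + 1, fun k hk => ?_⟩
  have h1 : φ k ≤ S.mIdx χ (φ k) := S.mIdx_ge χ (φ k)
  have h2 : k ≤ φ k := hφ.le_apply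
  omega
end
end

section
/- For every d ∈ (0,1), every integer k ≥ 1 and all x₁,…,x_k ∈ (0,1], one has (1 + x₁^d + ⋯ + x_k^d)/(1 + x₁ + ⋯ + x_k)^d ≥ (1 + max{x₁,…,x_k})^{1−d}. -/
/-!
Every `x i` is at most `S = ∑ x i`, and `x i ≤ x i ^ d` on `[0, 1]` since `d ≤ 1`. Hence
`(1 + max x)^(1-d) ≤ (1 + S)^(1-d) = (1 + S) / (1 + S)^d ≤ (1 + ∑ x i ^ d) / (1 + S)^d`.
-/

open Finset

/-- With Mathlib's convention `sSup ∅ = 0`, this also holds for an empty index type. -/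
theorem Real.sSup_range_le_sum {ι : Type*} [Fintype ι] {x : ι → ℝ} (hx : ∀ i, 0 ≤ x i) :
    sSup (Set.range x) ≤ ∑ i, x i :=
  Real.sSup_le (Set.forall_mem_range.2 fun j => single_le_sum (fun i _ => hx i) (mem_univ j))
    (sum_nonneg fun i _ => hx i)

theorem Real.rpow_one_sub_le_div_rpow {a b c d : ℝ} (ha : 0 < a) (hab : a ≤ b) (hbc : b ≤ c)
    (hd : d ≤ 1) : a ^ (1 - d) ≤ c / b ^ d := by
  have hb : 0 < b := ha.trans_le hab
  calc a ^ (1 - d) ≤ b ^ (1 - d) := Real.rpow_le_rpow ha.le hab (sub_nonneg.2 hd)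
    _ = b / b ^ d := by rw [Real.rpow_sub hb, Real.rpow_one]
    _ ≤ c / b ^ d := by gcongr

theorem one_add_sum_rpow_div_ge_general
    (d : ℝ) (hd : d ∈ Set.Ioo (0 : ℝ) 1)
    (k : ℕ)
    (x : Fin k → ℝ) (hx : ∀ i, x i ∈ Set.Ioc (0 : ℝ) 1) :
    (1 + sSup (Set.range x)) ^ (1 - d) ≤
      (1 + ∑ i, x i ^ d) / (1 + ∑ i, x i) ^ d := by
  have hx_nonneg : ∀ i, 0 ≤ x i := fun i => (hx i).1.le
  have hsup_nonneg : 0 ≤ sSup (Set.range x) :=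
    Real.sSup_nonneg (Set.forall_mem_range.2 hx_nonneg)
  have hsum_le : ∑ i, x i ≤ ∑ i, x i ^ d :=
    sum_le_sum fun i _ => Real.self_le_rpow_of_le_one (hx_nonneg i) (hx i).2 hd.2.le
  exact Real.rpow_one_sub_le_div_rpow (by linarith)
    (add_le_add_right (Real.sSup_range_le_sum hx_nonneg) 1) (add_le_add_right hsum_le 1) hd.2.le

/-- **(5.13), elementary inequality.** For `d ∈ (0,1)`, `k ≥ 1` and `x₁,…,x_k ∈ (0,1]`,
`(1 + x₁^d + ⋯ + x_k^d)/(1 + x₁ + ⋯ + x_k)^d ≥ (1 + max{x₁,…,x_k})^{1-d}`. -/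
theorem one_add_sum_rpow_div_ge
    (d : ℝ) (hd : d ∈ Set.Ioo (0 : ℝ) 1)
    (k : ℕ) (hk : 1 ≤ k)
    (x : Fin k → ℝ) (hx : ∀ i, x i ∈ Set.Ioc (0 : ℝ) 1) :
    (1 + sSup (Set.range x)) ^ (1 - d) ≤
      (1 + ∑ i, x i ^ d) / (1 + ∑ i, x i) ^ d :=
  one_add_sum_rpow_div_ge_general d hd k x hx
end
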